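/- arXiv:math/0303317 — 3 statements merged into one kernel-verified Lean document; each statement's English description precedes it below -/
import Mathlib

section
/- For all natural numbers n, m ≥ 1, the maximal Orchard crossing number of the complete bipartite graph K_{n,m} equals 2·(n choose 2)·(m choose 2) + 2m·(n choose 3) + 2n·(m choose 3). -/
set_option linter.unusedSectionVars false

/-!
Common definitions for the Orchard crossing number
(Feder–Garber, "The Orchard crossing number of an abstract graph").
-/

noncomputable section

/-- Points of the plane. -/
abbrev Pt : Type := ℝ × ℝ

/-- The line through two points of the plane. -/
def lineThrough (p q : Pt) : Set Pt := (affineSpan ℝ ({p, q} : Set Pt) : Set Pt)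

/-- A line (or any set) `L` separates the points `P` and `Q` if both lie off `L`
and they lie in different connected components of the complement of `L`. -/
def Separates (L : Set Pt) (P Q : Pt) : Prop :=
  P ∉ L ∧ Q ∉ L ∧ connectedComponentIn Lᶜ P ≠ connectedComponentIn Lᶜ Q

theorem Separates.symm {L : Set Pt} {P Q : Pt} (h : Separates L P Q) : Separates L Q P :=
  ⟨h.2.1, h.1, h.2.2.symm⟩

/-- A generic configuration: a finite set of points, no three of which are collinear. -/
def GenericConfig (S : Set Pt) : Prop :=
  S.Finite ∧ ∀ p ∈ S, ∀ q ∈ S, ∀ r ∈ S, p ≠ q → p ≠ r → q ≠ r →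
    ¬ Collinear ℝ ({p, q, r} : Set Pt)

/-- A finite set of points is in convex position if every point of it is an extreme
point of its convex hull, i.e. lies outside the convex hull of the other points. -/
def ConvexPosition (S : Set Pt) : Prop :=
  ∀ p ∈ S, p ∉ convexHull ℝ (S \ {p})

variable {V : Type*} [Fintype V] [DecidableEq V]

/-- A rectilinear drawing of a graph on vertex set `V`: an injective placement of the
vertices in the plane whose image is a generic configuration. -/
def IsRectDrawing (f : V → Pt) : Prop :=
  Function.Injective f ∧ GenericConfig (Set.range f)

/-- `sepCount f s t` is `n(s,t)`: the number of (unordered) pairs of vertices, both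
different from `s` and `t`, whose drawn points span a line separating `f s` from `f t`. -/
def sepCount (f : V → Pt) (s t : V) : ℕ :=
  Set.ncard {e : Finset V | ∃ a b : V, e = {a, b} ∧ a ≠ b ∧ s ∉ e ∧ t ∉ e ∧
    Separates (lineThrough (f a) (f b)) (f s) (f t)}

theorem sepCount_symm (f : V → Pt) (s t : V) : sepCount f s t = sepCount f t s := by
  unfold sepCount
  congr 1
  ext e
  constructor
  · rintro ⟨a, b, rfl, hab, hs, ht, hsep⟩
    exact ⟨a, b, rfl, hab, ht, hs, hsep.symm⟩
  · rintro ⟨a, b, rfl, hab, ht, hs, hsep⟩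
    exact ⟨a, b, rfl, hab, hs, ht, hsep.symm⟩

/-- The crossing number `n(R(G))` of a drawing: the sum of `n(s,t)` over all edges. -/
def drawingCrossings (G : SimpleGraph V) (f : V → Pt) : ℕ :=
  ∑ e ∈ G.edgeSet.toFinite.toFinset,
    Sym2.lift ⟨fun s t => sepCount f s t, fun s t => sepCount_symm f s t⟩ e

/-- The Orchard crossing number: the minimum of `n(R(G))` over all rectilinear drawings. -/
def OCN (G : SimpleGraph V) : ℕ :=
  sInf {n | ∃ f : V → Pt, IsRectDrawing f ∧ drawingCrossings G f = n}

/-- The maximal Orchard crossing number: the maximum of `n(R(G))` over all drawings. -/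
def MOCN (G : SimpleGraph V) : ℕ :=
  sSup {n | ∃ f : V → Pt, IsRectDrawing f ∧ drawingCrossings G f = n}

/-- The open segment drawn for an edge. -/
def edgeSeg (f : V → Pt) (e : Sym2 V) : Set Pt :=
  Sym2.lift ⟨fun a b => openSegment ℝ (f a) (f b), fun a b => openSegment_symm ℝ (f a) (f b)⟩ e

/-- The number of unordered pairs of distinct edges of `G` whose drawn open segments
intersect. -/
def crossPairs (G : SimpleGraph V) (f : V → Pt) : ℕ :=
  Set.ncard {p : Finset (Sym2 V) | ∃ e₁ e₂ : Sym2 V, p = {e₁, e₂} ∧ e₁ ≠ e₂ ∧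
    e₁ ∈ G.edgeSet ∧ e₂ ∈ G.edgeSet ∧ (edgeSeg f e₁ ∩ edgeSeg f e₂).Nonempty}

/-- The rectilinear crossing number: the minimum number of crossing pairs of edges
over all rectilinear drawings. -/
def rcr (G : SimpleGraph V) : ℕ :=
  sInf {n | ∃ f : V → Pt, IsRectDrawing f ∧ crossPairs G f = n}

/-- The number of 4-element subsets of the drawn points which are in convex position. -/
def convexFour (f : V → Pt) : ℕ :=
  Set.ncard {Q : Finset Pt | Q.card = 4 ∧ (Q : Set Pt) ⊆ Set.range f ∧
    ConvexPosition (Q : Set Pt)}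

/-- The cyclic successor on `Fin n`. -/
def nextFin {n : ℕ} (i : Fin n) : Fin n :=
  ⟨(i.val + 1) % n, Nat.mod_lt _ (Nat.zero_lt_of_lt i.isLt)⟩

/-- The star graph `K_{n,1}` on `n+1` vertices: the center `0` is joined to each of
the `n` outer vertices. -/
def starGraph (n : ℕ) : SimpleGraph (Fin (n + 1)) :=
  SimpleGraph.fromEdgeSet {e | ∃ i : Fin n, e = s((0 : Fin (n + 1)), i.succ)}

/-- The wheel graph `W_{n,1}` on `n+1` vertices: a cycle on the `n` outer vertices
together with a hub `0` joined to each of them. -/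
def wheelGraph (n : ℕ) : SimpleGraph (Fin (n + 1)) :=
  SimpleGraph.fromEdgeSet
    ({e | ∃ i : Fin n, e = s((0 : Fin (n + 1)), i.succ)} ∪
     {e | ∃ i : Fin n, e = s(i.succ, (nextFin i).succ)})

/-- The cycle graph `C_n` on the outer vertices `1, …, n` of `Fin (n+1)`, together
with the isolated vertex `0`. -/
def cycleWithIsolated (n : ℕ) : SimpleGraph (Fin (n + 1)) :=
  SimpleGraph.fromEdgeSet {e | ∃ i : Fin n, e = s(i.succ, (nextFin i).succ)}

/-- `HullCycle f` says that for every `i`, all the other drawn points lie (strictly) on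
one side of the line through `f i` and `f (i+1)`; for an injective generic placement this
means the points are in convex position and occur around the convex hull exactly in the
cyclic order `f 0, f 1, …`. -/
def HullCycle {m : ℕ} (f : Fin m → Pt) : Prop :=
  ∀ i j l : Fin m, j ≠ i → j ≠ nextFin i → l ≠ i → l ≠ nextFin i →
    ¬ Separates (lineThrough (f i) (f (nextFin i))) (f j) (f l)

end


namespace MOCN

def D (p q r : Pt) : ℝ := (q.1 - p.1) * (r.2 - p.2) - (q.2 - p.2) * (r.1 - p.1)

lemma D_cyc (p q r : Pt) : D p q r = D q r p := by unfold D; ring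
lemma D_swap (p q r : Pt) : D p q r = -D p r q := by unfold D; ring
lemma D_swap' (p q r : Pt) : D p q r = -D q p r := by unfold D; ring

lemma D_self_right (p q : Pt) : D p q q = 0 := by unfold D; ring
lemma D_self_left (p r : Pt) : D p p r = 0 := by unfold D; ring
lemma D_self_13 (p q : Pt) : D p q p = 0 := by unfold D; ring

lemma ne12_of_D {p q r : Pt} (h : D p q r ≠ 0) : p ≠ q := by
  rintro rfl; exact h (D_self_left _ _)
lemma ne23_of_D {p q r : Pt} (h : D p q r ≠ 0) : q ≠ r := by
  rintro rfl; exact h (D_self_right _ _)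
lemma ne13_of_D {p q r : Pt} (h : D p q r ≠ 0) : p ≠ r := by
  rintro rfl; exact h (D_self_13 _ _)

lemma smul_sub_coords (r : ℝ) (v : Pt) : r • v = (r * v.1, r * v.2) := rfl

lemma mem_lineThrough {p q : Pt} (hpq : p ≠ q) (x : Pt) :
    x ∈ lineThrough p q ↔ D p q x = 0 := by
  have hx : x = (x - p) +ᵥ p := by
    simp [vadd_eq_add]
  constructor
  · intro hmem
    rw [lineThrough, SetLike.mem_coe] at hmem
    rw [hx] at hmem
    rcases vadd_left_mem_affineSpan_pair.mp hmem with ⟨r, hr⟩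
    have h1 : r * (q.1 - p.1) = x.1 - p.1 := congrArg Prod.fst hr
    have h2 : r * (q.2 - p.2) = x.2 - p.2 := congrArg Prod.snd hr
    unfold D; rw [← h1, ← h2]; ring
  · intro hD
    rw [lineThrough, SetLike.mem_coe, hx]
    apply vadd_left_mem_affineSpan_pair.mpr
    have hD' : (q.1 - p.1) * (x.2 - p.2) = (q.2 - p.2) * (x.1 - p.1) := by
      unfold D at hD; linarith
    have hne : q.1 - p.1 ≠ 0 ∨ q.2 - p.2 ≠ 0 := by
      by_contra hc
      push_neg at hc
      exact hpq (Prod.ext (by linarith [sub_eq_zero.mp hc.1]) (by linarith [sub_eq_zero.mp hc.2])).symm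
    rcases hne with h | h
    · refine ⟨(x.1 - p.1) / (q.1 - p.1), ?_⟩
      have hv : q -ᵥ p = (q.1 - p.1, q.2 - p.2) := rfl
      rw [hv, smul_sub_coords]
      have hx1 : (x.1 - p.1) / (q.1 - p.1) * (q.1 - p.1) = x.1 - p.1 := by
        field_simp
      have hx2 : (x.1 - p.1) / (q.1 - p.1) * (q.2 - p.2) = x.2 - p.2 := by
        field_simp
        nlinarith [hD']
      exact Prod.ext hx1 hx2
    · refine ⟨(x.2 - p.2) / (q.2 - p.2), ?_⟩
      have hv : q -ᵥ p = (q.1 - p.1, q.2 - p.2) := rfl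
      rw [hv, smul_sub_coords]
      have hx2 : (x.2 - p.2) / (q.2 - p.2) * (q.2 - p.2) = x.2 - p.2 := by
        field_simp
      have hx1 : (x.2 - p.2) / (q.2 - p.2) * (q.1 - p.1) = x.1 - p.1 := by
        field_simp
        nlinarith [hD']
      exact Prod.ext hx1 hx2

end MOCN

namespace MOCN

lemma D_affine (p q : Pt) {a b : ℝ} (hab : a + b = 1) (x y : Pt) :
    D p q (a • x + b • y) = a * D p q x + b * D p q y := by
  have hx : a • x + b • y = (a * x.1 + b * y.1, a * x.2 + b * y.2) := rfl
  unfold D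
  rw [hx]
  have hb : b = 1 - a := by linarith
  subst hb
  ring

lemma D_continuous (p q : Pt) : Continuous (fun x : Pt => D p q x) := by
  unfold D; fun_prop

lemma convex_pos (p q : Pt) : Convex ℝ {x : Pt | 0 < D p q x} := by
  intro x hx y hy a b ha hb hab
  simp only [Set.mem_setOf_eq] at *
  rw [D_affine p q hab]
  have h1 : a * min (D p q x) (D p q y) ≤ a * D p q x :=
    mul_le_mul_of_nonneg_left (min_le_left _ _) ha
  have h2 : b * min (D p q x) (D p q y) ≤ b * D p q y :=
    mul_le_mul_of_nonneg_left (min_le_right _ _) hb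
  have h3 : a * min (D p q x) (D p q y) + b * min (D p q x) (D p q y)
      = min (D p q x) (D p q y) := by rw [← add_mul, hab, one_mul]
  have h4 : 0 < min (D p q x) (D p q y) := lt_min hx hy
  linarith
lemma convex_neg (p q : Pt) : Convex ℝ {x : Pt | D p q x < 0} := by
  intro x hx y hy a b ha hb hab
  simp only [Set.mem_setOf_eq] at *
  rw [D_affine p q hab]
  have h1 : a * D p q x ≤ a * max (D p q x) (D p q y) :=
    mul_le_mul_of_nonneg_left (le_max_left _ _) ha
  have h2 : b * D p q y ≤ b * max (D p q x) (D p q y) :=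
    mul_le_mul_of_nonneg_left (le_max_right _ _) hb
  have h3 : a * max (D p q x) (D p q y) + b * max (D p q x) (D p q y)
      = max (D p q x) (D p q y) := by rw [← add_mul, hab, one_mul]
  have h4 : max (D p q x) (D p q y) < 0 := max_lt hx hy
  linarith

lemma sep_iff {p q : Pt} (hpq : p ≠ q) (r s : Pt) :
    Separates (lineThrough p q) r s ↔ D p q r * D p q s < 0 := by
  have hmem := mem_lineThrough hpq
  have hcompl : (lineThrough p q)ᶜ = {x : Pt | D p q x ≠ 0} := by
    ext x; simp [hmem x]
  constructor
  · rintro ⟨hr, hs, hne⟩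
    have hr' : D p q r ≠ 0 := by rw [hmem] at hr; exact hr
    have hs' : D p q s ≠ 0 := by rw [hmem] at hs; exact hs
    rcases lt_or_gt_of_ne hr' with h1 | h1 <;> rcases lt_or_gt_of_ne hs' with h2 | h2
    · exfalso
      apply hne
      apply connectedComponentIn_eq
      apply (convex_neg p q).isPreconnected.subset_connectedComponentIn
      · exact h1
      · rw [hcompl]; intro x hx; exact ne_of_lt hx
      · exact h2
    · nlinarith
    · nlinarith
    · exfalso
      apply hne
      apply connectedComponentIn_eq
      apply (convex_pos p q).isPreconnected.subset_connectedComponentIn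
      · exact h1
      · rw [hcompl]; intro x hx; exact ne_of_gt hx
      · exact h2
  · intro hprod
    have hr' : D p q r ≠ 0 := by rintro h; rw [h] at hprod; simp at hprod
    have hs' : D p q s ≠ 0 := by rintro h; rw [h] at hprod; simp at hprod
    refine ⟨by rw [hmem]; exact hr', by rw [hmem]; exact hs', ?_⟩
    intro heq
    have hpre : IsPreconnected (connectedComponentIn (lineThrough p q)ᶜ r) :=
      isPreconnected_connectedComponentIn
    have hrC : r ∈ connectedComponentIn (lineThrough p q)ᶜ r :=
      mem_connectedComponentIn (by rw [hcompl]; exact hr')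
    have hsC : s ∈ connectedComponentIn (lineThrough p q)ᶜ r := by
      rw [heq]
      exact mem_connectedComponentIn (by rw [hcompl]; exact hs')
    set C := connectedComponentIn (lineThrough p q)ᶜ r
    have hCsub : C ⊆ {x : Pt | D p q x ≠ 0} := by
      rw [← hcompl]; exact connectedComponentIn_subset _ _
    have hU : IsOpen {x : Pt | 0 < D p q x} := isOpen_lt continuous_const (D_continuous p q)
    have hV : IsOpen {x : Pt | D p q x < 0} := isOpen_lt (D_continuous p q) continuous_const
    have hcover : C ⊆ {x : Pt | 0 < D p q x} ∪ {x : Pt | D p q x < 0} := by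
      intro x hx
      rcases lt_or_gt_of_ne (hCsub hx) with h | h
      · exact Or.inr h
      · exact Or.inl h
    have hCU : (C ∩ {x : Pt | 0 < D p q x}).Nonempty := by
      rcases mul_neg_iff.mp hprod with ⟨h1, h2⟩ | ⟨h1, h2⟩
      · exact ⟨r, hrC, h1⟩
      · exact ⟨s, hsC, h2⟩
    have hCV : (C ∩ {x : Pt | D p q x < 0}).Nonempty := by
      rcases mul_neg_iff.mp hprod with ⟨h1, h2⟩ | ⟨h1, h2⟩
      · exact ⟨s, hsC, h2⟩
      · exact ⟨r, hrC, h1⟩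
    rcases hpre _ _ hU hV hcover hCU hCV with ⟨x, _, hx1, hx2⟩
    simp only [Set.mem_setOf_eq] at hx1 hx2
    linarith

lemma collinear_of_D_eq_zero {p q r : Pt} (h : D p q r = 0) :
    Collinear ℝ ({p, q, r} : Set Pt) := by
  by_cases hpq : p = q
  · subst hpq
    rw [Set.insert_comm, Set.insert_eq_self.mpr (by simp : p ∈ ({p, r} : Set Pt))]
    exact collinear_pair ℝ p r
  · have : r ∈ affineSpan ℝ ({p, q} : Set Pt) := (mem_lineThrough hpq r).mpr h
    have hcol : Collinear ℝ ({r, p, q} : Set Pt) := collinear_insert_of_mem_affineSpan_pair this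
    have : ({p, q, r} : Set Pt) = {r, p, q} := by
      ext x; simp [or_comm, or_assoc, or_left_comm]
    rw [this]; exact hcol

lemma notCollinear_of_D {p q r : Pt} (h : D p q r ≠ 0) :
    ¬ Collinear ℝ ({p, q, r} : Set Pt) := fun hc => by
  rcases (collinear_iff_exists_forall_eq_smul_vadd _).mp hc with ⟨p₀, v, hv⟩
  rcases hv p (by simp) with ⟨tp, rfl⟩
  rcases hv q (by simp) with ⟨tq, rfl⟩
  rcases hv r (by simp) with ⟨tr, rfl⟩
  apply h
  show D (tp • v + p₀) (tq • v + p₀) (tr • v + p₀) = 0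
  have hco : ∀ t : ℝ, t • v + p₀ = (t * v.1 + p₀.1, t * v.2 + p₀.2) := fun t => rfl
  unfold D
  rw [hco, hco, hco]
  ring

end MOCN

namespace MOCN

lemma D_rel (P1 P2 P3 P4 : Pt) :
    D P2 P3 P4 - D P1 P3 P4 + D P1 P2 P4 - D P1 P2 P3 = 0 := by
  unfold D; ring

/-- shape 1+3 : no three of the conditions can hold -/
lemma noThree13 {P1 P2 P3 P4 : Pt}
    (hd1 : D P2 P3 P4 ≠ 0) (hd2 : D P1 P3 P4 ≠ 0)
    (hd3 : D P1 P2 P4 ≠ 0) (hd4 : D P1 P2 P3 ≠ 0) :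
    ¬(Separates (lineThrough P3 P4) P1 P2 ∧ Separates (lineThrough P2 P4) P1 P3 ∧
      Separates (lineThrough P2 P3) P1 P4) := by
  rintro ⟨h1, h2, h3⟩
  rw [sep_iff (ne23_of_D hd1) _ _] at h1
  rw [sep_iff (ne23_of_D hd3) _ _] at h2
  rw [sep_iff (ne12_of_D hd1) _ _] at h3
  have e1 : D P3 P4 P1 = D P1 P3 P4 := (D_cyc _ _ _).symm
  have e2 : D P3 P4 P2 = D P2 P3 P4 := (D_cyc _ _ _).symm
  have e3 : D P2 P4 P1 = D P1 P2 P4 := (D_cyc _ _ _).symm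
  have e4 : D P2 P4 P3 = -D P2 P3 P4 := D_swap _ _ _
  have e5 : D P2 P3 P1 = D P1 P2 P3 := (D_cyc _ _ _).symm
  rw [e1, e2] at h1
  rw [e3, e4] at h2
  rw [e5] at h3
  have hI := D_rel P1 P2 P3 P4
  have e : D P2 P3 P4 * D P2 P3 P4 - D P2 P3 P4 * D P1 P3 P4 + D P2 P3 P4 * D P1 P2 P4
      - D P2 P3 P4 * D P1 P2 P3 = 0 := by linear_combination (D P2 P3 P4) * hI
  nlinarith [h1, h2, h3, e, mul_self_nonneg (D P2 P3 P4)]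

/-- shape 3+1 -/
lemma noThree31 {P1 P2 P3 P4 : Pt}
    (hd1 : D P2 P3 P4 ≠ 0) (hd2 : D P1 P3 P4 ≠ 0)
    (hd3 : D P1 P2 P4 ≠ 0) (hd4 : D P1 P2 P3 ≠ 0) :
    ¬(Separates (lineThrough P2 P3) P1 P4 ∧ Separates (lineThrough P1 P3) P2 P4 ∧
      Separates (lineThrough P1 P2) P3 P4) := by
  rintro ⟨h1, h2, h3⟩
  rw [sep_iff (ne12_of_D hd1) _ _] at h1
  rw [sep_iff (ne13_of_D hd4) _ _] at h2
  rw [sep_iff (ne12_of_D hd4) _ _] at h3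
  have e1 : D P2 P3 P1 = D P1 P2 P3 := (D_cyc _ _ _).symm
  have e2 : D P1 P3 P2 = -D P1 P2 P3 := D_swap _ _ _
  rw [e1] at h1
  rw [e2] at h2
  have hI := D_rel P1 P2 P3 P4
  have e : D P1 P2 P3 * D P2 P3 P4 - D P1 P2 P3 * D P1 P3 P4 + D P1 P2 P3 * D P1 P2 P4
      - D P1 P2 P3 * D P1 P2 P3 = 0 := by linear_combination (D P1 P2 P3) * hI
  nlinarith [h1, h2, h3, e, mul_self_nonneg (D P1 P2 P3)]

/-- shape 2+2, combo (K11,K12,K21) -/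
lemma noThree22 {P1 P2 P3 P4 : Pt}
    (hd1 : D P2 P3 P4 ≠ 0) (hd2 : D P1 P3 P4 ≠ 0)
    (hd3 : D P1 P2 P4 ≠ 0) (hd4 : D P1 P2 P3 ≠ 0) :
    ¬(Separates (lineThrough P2 P4) P1 P3 ∧ Separates (lineThrough P2 P3) P1 P4 ∧
      Separates (lineThrough P1 P4) P2 P3) := by
  rintro ⟨h1, h2, h3⟩
  rw [sep_iff (ne23_of_D hd3) _ _] at h1
  rw [sep_iff (ne12_of_D hd1) _ _] at h2
  rw [sep_iff (ne13_of_D hd3) _ _] at h3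
  have e1 : D P2 P4 P1 = D P1 P2 P4 := (D_cyc _ _ _).symm
  have e2 : D P2 P4 P3 = -D P2 P3 P4 := D_swap _ _ _
  have e3 : D P2 P3 P1 = D P1 P2 P3 := (D_cyc _ _ _).symm
  have e4 : D P1 P4 P2 = -D P1 P2 P4 := D_swap _ _ _
  have e5 : D P1 P4 P3 = -D P1 P3 P4 := D_swap _ _ _
  rw [e1, e2] at h1
  rw [e3] at h2
  rw [e4, e5] at h3
  -- h1 : D P1 P2 P4 * -D P2 P3 P4 < 0 ; h2 : D P1 P2 P3 * D P2 P3 P4 < 0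
  -- h3 : -D P1 P2 P4 * -D P1 P3 P4 < 0
  have hI := D_rel P1 P2 P3 P4
  have h1' : 0 < D P2 P3 P4 * D P1 P2 P4 := by nlinarith [h1]
  have h3' : D P1 P3 P4 * D P1 P2 P4 < 0 := by nlinarith [h3]
  rcases mul_pos_iff.mp h1' with ⟨a1, a2⟩ | ⟨a1, a2⟩ <;>
    rcases mul_neg_iff.mp h3' with ⟨b1, b2⟩ | ⟨b1, b2⟩ <;>
    rcases mul_neg_iff.mp h2 with ⟨c1, c2⟩ | ⟨c1, c2⟩ <;>
    linarith

end MOCN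


namespace MOCN
open Finset

lemma lineThrough_comm (p q : Pt) : lineThrough p q = lineThrough q p := by
  unfold lineThrough; rw [Set.pair_comm]

section Count

variable {n m : ℕ}

open scoped Classical

def psi {n m : ℕ} : Fin n ⊕ Fin m → ℕ := Sum.elim (fun i => (i : ℕ)) (fun j => n + j)

lemma psi_inj : Function.Injective (psi (n := n) (m := m)) := by
  rintro (a | a) (b | b) h <;> simp [psi] at h
  · exact congrArg Sum.inl (Fin.ext h)
  · exact absurd h (by have := a.isLt; omega)
  · exact absurd h (by have := b.isLt; omega)
  · exact congrArg Sum.inr (Fin.ext (by omega))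

lemma psi_ne {a b : Fin n ⊕ Fin m} (h : psi a < psi b) : a ≠ b := by
  rintro rfl; exact lt_irrefl _ h

def cond (f : Fin n ⊕ Fin m → Pt)
    (x : (Fin n × Fin m) × (Fin n ⊕ Fin m) × (Fin n ⊕ Fin m)) : Prop :=
  psi x.2.1 < psi x.2.2 ∧ x.2.1 ≠ Sum.inl x.1.1 ∧ x.2.1 ≠ Sum.inr x.1.2 ∧
    x.2.2 ≠ Sum.inl x.1.1 ∧ x.2.2 ≠ Sum.inr x.1.2 ∧
    Separates (lineThrough (f x.2.1) (f x.2.2)) (f (Sum.inl x.1.1)) (f (Sum.inr x.1.2))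

noncomputable def TT (f : Fin n ⊕ Fin m → Pt) :
    Finset ((Fin n × Fin m) × (Fin n ⊕ Fin m) × (Fin n ⊕ Fin m)) :=
  univ.filter (cond f)

lemma sepCount_eq (f : Fin n ⊕ Fin m → Pt) (i : Fin n) (j : Fin m) :
    sepCount f (Sum.inl i) (Sum.inr j)
      = (univ.filter fun ab : (Fin n ⊕ Fin m) × (Fin n ⊕ Fin m) =>
          cond f ((i, j), ab)).card := by
  unfold sepCount
  set P : Finset (Fin n ⊕ Fin m) → Prop := fun e => ∃ a b, e = {a, b} ∧ a ≠ b ∧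
    Sum.inl i ∉ e ∧ Sum.inr j ∉ e ∧
    Separates (lineThrough (f a) (f b)) (f (Sum.inl i)) (f (Sum.inr j)) with hP
  have hset : {e : Finset (Fin n ⊕ Fin m) | P e} = ↑(univ.filter P) := by
    ext e; simp
  rw [hset, Set.ncard_coe_finset]
  symm
  apply Finset.card_bij (fun ab _ => ({ab.1, ab.2} : Finset (Fin n ⊕ Fin m)))
  · -- maps into
    rintro ⟨a, b⟩ hab
    simp only [mem_filter, mem_univ, true_and] at hab
    obtain ⟨hlt, h1, h2, h3, h4, hsep⟩ := hab
    simp only [mem_filter, mem_univ, true_and, hP]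
    exact ⟨a, b, rfl, psi_ne hlt, by simp [Ne.symm h1, Ne.symm h3],
      by simp [Ne.symm h2, Ne.symm h4], hsep⟩
  · -- injective
    rintro ⟨a, b⟩ ha ⟨c, d⟩ hc h
    simp only [mem_filter, mem_univ, true_and] at ha hc
    have hab : psi a < psi b := ha.1
    have hcd : psi c < psi d := hc.1
    have hac : a ∈ ({c, d} : Finset (Fin n ⊕ Fin m)) := by
      rw [← h]; simp
    have hbc : b ∈ ({c, d} : Finset (Fin n ⊕ Fin m)) := by
      rw [← h]; simp
    have hca : c ∈ ({a, b} : Finset (Fin n ⊕ Fin m)) := by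
      rw [h]; simp
    simp only [mem_insert, mem_singleton] at hac hbc hca
    rcases hac with rfl | rfl
    · rcases hbc with rfl | rfl
      · exact absurd hab (lt_irrefl _)
      · rfl
    · rcases hca with rfl | rfl
      · rcases hbc with rfl | rfl
        · rfl
        · exact absurd hab (lt_irrefl _)
      · exact absurd (hab.trans hcd) (lt_irrefl _)
  · -- surjective
    intro e he
    simp only [mem_filter, mem_univ, true_and, hP] at he
    obtain ⟨a, b, rfl, hne, hs, ht, hsep⟩ := he
    simp only [mem_insert, mem_singleton, not_or] at hs ht
    have hpsine : psi a ≠ psi b := fun h => hne (psi_inj h)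
    rcases lt_or_gt_of_ne hpsine with hlt | hlt
    · refine ⟨(a, b), ?_, rfl⟩
      simp only [mem_filter, mem_univ, true_and]
      exact ⟨hlt, Ne.symm hs.1, Ne.symm ht.1, Ne.symm hs.2, Ne.symm ht.2, hsep⟩
    · refine ⟨(b, a), ?_, ?_⟩
      · simp only [mem_filter, mem_univ, true_and]
        refine ⟨hlt, Ne.symm hs.2, Ne.symm ht.2, Ne.symm hs.1, Ne.symm ht.1, ?_⟩
        rwa [lineThrough_comm]
      · simp [Finset.pair_comm]

end Count
end MOCN

namespace MOCN
open Finset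
section Count2
variable {n m : ℕ}
open scoped Classical

lemma crossings_eq_sum (f : Fin n ⊕ Fin m → Pt) :
    drawingCrossings (completeBipartiteGraph (Fin n) (Fin m)) f
      = ∑ p : Fin n × Fin m, sepCount f (Sum.inl p.1) (Sum.inr p.2) := by
  unfold drawingCrossings
  symm
  apply Finset.sum_bij (fun (p : Fin n × Fin m) _ => s(Sum.inl p.1, Sum.inr p.2))
  · intro p _
    rw [Set.Finite.mem_toFinset, SimpleGraph.mem_edgeSet]
    simp [completeBipartiteGraph]
  · intro p _ q _ h
    rw [Sym2.eq_iff] at h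
    rcases h with ⟨h1, h2⟩ | ⟨h1, h2⟩
    · obtain ⟨p1, p2⟩ := p; obtain ⟨q1, q2⟩ := q
      simp only [Sum.inl.injEq, Sum.inr.injEq] at h1 h2
      simp [h1, h2]
    · simp at h1
  · intro e he
    rw [Set.Finite.mem_toFinset] at he
    induction e using Sym2.ind with
    | _ u v =>
      rw [SimpleGraph.mem_edgeSet] at he
      rcases u with i | i <;> rcases v with j | j
      · simp [completeBipartiteGraph] at he
      · exact ⟨(i, j), mem_univ _, rfl⟩
      · exact ⟨(j, i), mem_univ _, Sym2.eq_swap⟩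
      · simp [completeBipartiteGraph] at he
  · intro p _
    rw [Sym2.lift_mk]

lemma crossings_eq_TT (f : Fin n ⊕ Fin m → Pt) :
    drawingCrossings (completeBipartiteGraph (Fin n) (Fin m)) f = (TT f).card := by
  rw [crossings_eq_sum]
  have h1 : ∀ p : Fin n × Fin m, sepCount f (Sum.inl p.1) (Sum.inr p.2)
      = (univ.filter fun ab : (Fin n ⊕ Fin m) × (Fin n ⊕ Fin m) => cond f (p, ab)).card := by
    intro p
    rw [sepCount_eq f p.1 p.2]
  rw [Finset.sum_congr rfl (fun p _ => h1 p)]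
  rw [TT, Finset.card_filter]
  rw [show (univ : Finset ((Fin n × Fin m) × (Fin n ⊕ Fin m) × (Fin n ⊕ Fin m)))
      = univ ×ˢ univ from (Finset.univ_product_univ).symm]
  rw [Finset.sum_product]
  apply Finset.sum_congr rfl
  intro p _
  rw [Finset.card_filter]

end Count2
end MOCN

namespace MOCN
open Finset
section Count3
variable {n m : ℕ}
open scoped Classical

def quadF (x : (Fin n × Fin m) × (Fin n ⊕ Fin m) × (Fin n ⊕ Fin m)) :
    Finset (Fin n ⊕ Fin m) := {Sum.inl x.1.1, Sum.inr x.1.2, x.2.1, x.2.2}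

noncomputable def phiq (x : (Fin n × Fin m) × (Fin n ⊕ Fin m) × (Fin n ⊕ Fin m)) :
    Finset (Fin n) × Finset (Fin m) :=
  (univ.filter fun i => Sum.inl i ∈ quadF x, univ.filter fun j => Sum.inr j ∈ quadF x)

def Q24 (n m : ℕ) : Finset (Finset (Fin n) × Finset (Fin m)) :=
  ((univ.powersetCard 2) ×ˢ (univ.powersetCard 2)) ∪
    ((univ.powersetCard 3) ×ˢ (univ.powersetCard 1)) ∪
    ((univ.powersetCard 1) ×ˢ (univ.powersetCard 3))

lemma mem_phiq_fst {x} {i : Fin n} :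
    i ∈ (phiq (m := m) x).1 ↔ Sum.inl i ∈ quadF x := by simp [phiq]

lemma mem_phiq_snd {x} {j : Fin m} :
    j ∈ (phiq (n := n) x).2 ↔ Sum.inr j ∈ quadF x := by simp [phiq]

lemma quad_eq_of_phiq {x y : (Fin n × Fin m) × (Fin n ⊕ Fin m) × (Fin n ⊕ Fin m)}
    (h : phiq x = phiq y) : quadF x = quadF y := by
  ext v
  rcases v with i | j
  · rw [← mem_phiq_fst, ← mem_phiq_fst, h]
  · rw [← mem_phiq_snd, ← mem_phiq_snd, h]

lemma mem_quad_inl (x) : Sum.inl x.1.1 ∈ quadF (n := n) (m := m) x := by simp [quadF]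
lemma mem_quad_inr (x) : Sum.inr x.1.2 ∈ quadF (n := n) (m := m) x := by simp [quadF]
lemma mem_quad_a (x) : x.2.1 ∈ quadF (n := n) (m := m) x := by simp [quadF]
lemma mem_quad_b (x) : x.2.2 ∈ quadF (n := n) (m := m) x := by simp [quadF]

lemma pair_complement {f : Fin n ⊕ Fin m → Pt} {x} (hx : cond f x)
    {c d : Fin n ⊕ Fin m} (hc : c ∈ quadF x) (hd : d ∈ quadF x) (hcd : c ≠ d)
    (hc1 : c ≠ Sum.inl x.1.1) (hc2 : c ≠ Sum.inr x.1.2)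
    (hd1 : d ≠ Sum.inl x.1.1) (hd2 : d ≠ Sum.inr x.1.2) :
    (x.2.1 = c ∧ x.2.2 = d) ∨ (x.2.1 = d ∧ x.2.2 = c) := by
  simp only [quadF, mem_insert, mem_singleton] at hc hd
  rcases hc with h | h | h | h
  · exact absurd h hc1
  · exact absurd h hc2
  · rcases hd with h' | h' | h' | h'
    · exact absurd h' hd1
    · exact absurd h' hd2
    · exact absurd (h' ▸ h : c = d) hcd
    · exact Or.inl ⟨h.symm, h'.symm⟩
  · rcases hd with h' | h' | h' | h'
    · exact absurd h' hd1
    · exact absurd h' hd2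
    · exact Or.inr ⟨h'.symm, h.symm⟩
    · exact absurd (h' ▸ h : c = d) hcd

lemma sep_from_tuple {f : Fin n ⊕ Fin m → Pt} {x} (hx : cond f x)
    {c d : Fin n ⊕ Fin m} (hc : c ∈ quadF x) (hd : d ∈ quadF x) (hcd : c ≠ d)
    (hc1 : c ≠ Sum.inl x.1.1) (hc2 : c ≠ Sum.inr x.1.2)
    (hd1 : d ≠ Sum.inl x.1.1) (hd2 : d ≠ Sum.inr x.1.2) :
    Separates (lineThrough (f c) (f d)) (f (Sum.inl x.1.1)) (f (Sum.inr x.1.2)) := by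
  have hsep := hx.2.2.2.2.2
  rcases pair_complement hx hc hd hcd hc1 hc2 hd1 hd2 with ⟨h1, h2⟩ | ⟨h1, h2⟩
  · rwa [h1, h2] at hsep
  · rw [h1, h2] at hsep
    rwa [lineThrough_comm]

lemma tuple_eq {f : Fin n ⊕ Fin m → Pt} {x y} (hx : cond f x) (hy : cond f y)
    (hq : phiq x = phiq y) (hij : x.1 = y.1) : x = y := by
  have hquad := quad_eq_of_phiq hq
  have h1 : y.2.1 ∈ quadF x := hquad ▸ mem_quad_a y
  have h2 : y.2.2 ∈ quadF x := hquad ▸ mem_quad_b y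
  have hyab : y.2.1 ≠ y.2.2 := psi_ne hy.1
  rcases pair_complement hx h1 h2 hyab
      (hij ▸ hy.2.1) (hij ▸ hy.2.2.1) (hij ▸ hy.2.2.2.1) (hij ▸ hy.2.2.2.2.1)
    with ⟨e1, e2⟩ | ⟨e1, e2⟩
  · exact Prod.ext hij (Prod.ext e1 e2)
  · exfalso
    have := hx.1
    rw [e1, e2] at this
    exact lt_asymm this hy.1

lemma quad_card {f : Fin n ⊕ Fin m → Pt} {x} (hx : cond f x) : (quadF x).card = 4 := by
  obtain ⟨⟨i, j⟩, a, b⟩ := x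
  obtain ⟨hlt, h1, h2, h3, h4, -⟩ := hx
  have hab : a ≠ b := psi_ne hlt
  simp only [quadF]
  rw [card_insert_of_notMem (by simp [Ne.symm h1, Ne.symm h3]),
    card_insert_of_notMem (by simp [Ne.symm h2, Ne.symm h4]),
    card_insert_of_notMem (by simp [hab]), card_singleton]

lemma phiq_card {f : Fin n ⊕ Fin m → Pt} {x} (hx : cond f x) :
    (phiq x).1.card + (phiq x).2.card = 4 := by
  have himg : quadF x = (phiq x).1.image Sum.inl ∪ (phiq x).2.image Sum.inr := by
    ext v
    rcases v with i | j <;> simp [mem_phiq_fst, mem_phiq_snd, phiq]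
  have hdisj : Disjoint ((phiq x).1.image Sum.inl) ((phiq x).2.image Sum.inr) := by
    rw [Finset.disjoint_left]
    intro v hv1 hv2
    simp only [mem_image] at hv1 hv2
    obtain ⟨i, -, rfl⟩ := hv1
    obtain ⟨j, -, hj⟩ := hv2
    exact Sum.inr_ne_inl hj
  have := quad_card hx
  rw [himg, card_union_of_disjoint hdisj,
    Finset.card_image_of_injective _ Sum.inl_injective,
    Finset.card_image_of_injective _ Sum.inr_injective] at this
  exact this

lemma phiq_mem_Q24 {f : Fin n ⊕ Fin m → Pt} {x} (hx : cond f x) :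
    phiq x ∈ Q24 n m := by
  have hsum := phiq_card hx
  have h1 : 1 ≤ (phiq x).1.card := Finset.card_pos.mpr ⟨x.1.1, mem_phiq_fst.mpr (mem_quad_inl x)⟩
  have h2 : 1 ≤ (phiq x).2.card := Finset.card_pos.mpr ⟨x.1.2, mem_phiq_snd.mpr (mem_quad_inr x)⟩
  simp only [Q24, mem_union, Finset.mem_product, Finset.mem_powersetCard]
  have : ((phiq x).1.card = 2 ∧ (phiq x).2.card = 2) ∨
      ((phiq x).1.card = 3 ∧ (phiq x).2.card = 1) ∨
      ((phiq x).1.card = 1 ∧ (phiq x).2.card = 3) := by omega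
  rcases this with ⟨ha, hb⟩ | ⟨ha, hb⟩ | ⟨ha, hb⟩
  · exact Or.inl (Or.inl ⟨⟨subset_univ _, ha⟩, ⟨subset_univ _, hb⟩⟩)
  · exact Or.inl (Or.inr ⟨⟨subset_univ _, ha⟩, ⟨subset_univ _, hb⟩⟩)
  · exact Or.inr ⟨⟨subset_univ _, ha⟩, ⟨subset_univ _, hb⟩⟩

lemma card_Q24 : (Q24 n m).card =
    n.choose 2 * m.choose 2 + n.choose 3 * m + n * m.choose 3 := by
  have hd1 : Disjoint ((univ.powersetCard 2 : Finset (Finset (Fin n))) ×ˢ (univ.powersetCard 2 : Finset (Finset (Fin m))))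
      ((univ.powersetCard 3 : Finset (Finset (Fin n))) ×ˢ (univ.powersetCard 1 : Finset (Finset (Fin m)))) := by
    rw [Finset.disjoint_left]
    rintro ⟨q1, q2⟩ h1 h2
    simp only [Finset.mem_product, Finset.mem_powersetCard] at h1 h2
    omega
  have hd2 : Disjoint (((univ.powersetCard 2 : Finset (Finset (Fin n))) ×ˢ (univ.powersetCard 2 : Finset (Finset (Fin m)))) ∪
      ((univ.powersetCard 3 : Finset (Finset (Fin n))) ×ˢ (univ.powersetCard 1 : Finset (Finset (Fin m)))))
      ((univ.powersetCard 1 : Finset (Finset (Fin n))) ×ˢ (univ.powersetCard 3 : Finset (Finset (Fin m)))) := by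
    rw [Finset.disjoint_left]
    rintro ⟨q1, q2⟩ h1 h2
    simp only [Finset.mem_union, Finset.mem_product, Finset.mem_powersetCard] at h1 h2
    omega
  rw [Q24, card_union_of_disjoint hd2, card_union_of_disjoint hd1]
  simp [Finset.card_powersetCard, Nat.choose_one_right]

end Count3
end MOCN

namespace MOCN
open Finset
section Count4
variable {n m : ℕ}
open scoped Classical

lemma card_five {Q : Finset (Fin n ⊕ Fin m)} (hQ : Q.card = 4)
    {v1 v2 v3 v4 v5 : Fin n ⊕ Fin m}
    (m1 : v1 ∈ Q) (m2 : v2 ∈ Q) (m3 : v3 ∈ Q) (m4 : v4 ∈ Q) (m5 : v5 ∈ Q)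
    (d12 : v1 ≠ v2) (d13 : v1 ≠ v3) (d14 : v1 ≠ v4) (d15 : v1 ≠ v5)
    (d23 : v2 ≠ v3) (d24 : v2 ≠ v4) (d25 : v2 ≠ v5)
    (d34 : v3 ≠ v4) (d35 : v3 ≠ v5) (d45 : v4 ≠ v5) : False := by
  have hsub : ({v1, v2, v3, v4, v5} : Finset (Fin n ⊕ Fin m)) ⊆ Q := by
    intro w hw
    simp only [mem_insert, mem_singleton] at hw
    rcases hw with rfl | rfl | rfl | rfl | rfl <;> assumption
  have hcard : ({v1, v2, v3, v4, v5} : Finset (Fin n ⊕ Fin m)).card = 5 := by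
    rw [card_insert_of_notMem (by simp [d12, d13, d14, d15]),
      card_insert_of_notMem (by simp [d23, d24, d25]),
      card_insert_of_notMem (by simp [d34, d35]),
      card_insert_of_notMem (by simp [d45]), card_singleton]
  have := Finset.card_le_card hsub
  omega

lemma all_i_case {f : Fin n ⊕ Fin m → Pt}
    (hDne : ∀ u v w : Fin n ⊕ Fin m, u ≠ v → u ≠ w → v ≠ w → D (f u) (f v) (f w) ≠ 0)
    {x y z : (Fin n × Fin m) × (Fin n ⊕ Fin m) × (Fin n ⊕ Fin m)}
    (hcx : cond f x) (hcy : cond f y) (hcz : cond f z)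
    (hqxy : phiq x = phiq y) (hqxz : phiq x = phiq z)
    (hixy : x.1.1 = y.1.1) (hixz : x.1.1 = z.1.1)
    (hjxy : x.1.2 ≠ y.1.2) (hjxz : x.1.2 ≠ z.1.2) (hjyz : y.1.2 ≠ z.1.2) : False := by
  have hQxy := quad_eq_of_phiq hqxy
  have hQxz := quad_eq_of_phiq hqxz
  have c1 : Separates (lineThrough (f (Sum.inr y.1.2)) (f (Sum.inr z.1.2)))
      (f (Sum.inl x.1.1)) (f (Sum.inr x.1.2)) := by
    refine sep_from_tuple hcx ?_ ?_ (by simpa using hjyz) (by simp)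
      (by simpa using Ne.symm hjxy) (by simp) (by simpa using Ne.symm hjxz)
    · rw [hQxy]; exact mem_quad_inr y
    · rw [hQxz]; exact mem_quad_inr z
  have c2 : Separates (lineThrough (f (Sum.inr x.1.2)) (f (Sum.inr z.1.2)))
      (f (Sum.inl x.1.1)) (f (Sum.inr y.1.2)) := by
    rw [hixy]
    refine sep_from_tuple hcy ?_ ?_ (by simpa using hjxz) (by simp)
      (by simpa using hjxy) (by simp) (by simpa using Ne.symm hjyz)
    · rw [← hQxy]; exact mem_quad_inr x
    · rw [← hQxy, hQxz]; exact mem_quad_inr z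
  have c3 : Separates (lineThrough (f (Sum.inr x.1.2)) (f (Sum.inr y.1.2)))
      (f (Sum.inl x.1.1)) (f (Sum.inr z.1.2)) := by
    rw [hixz]
    refine sep_from_tuple hcz ?_ ?_ (by simpa using hjxy) (by simp)
      (by simpa using hjxz) (by simp) (by simpa using hjyz)
    · rw [← hQxz]; exact mem_quad_inr x
    · rw [← hQxz, hQxy]; exact mem_quad_inr y
  exact noThree13
    (hDne (Sum.inr x.1.2) (Sum.inr y.1.2) (Sum.inr z.1.2)
      (by simpa using hjxy) (by simpa using hjxz) (by simpa using hjyz))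
    (hDne (Sum.inl x.1.1) (Sum.inr y.1.2) (Sum.inr z.1.2)
      (by simp) (by simp) (by simpa using hjyz))
    (hDne (Sum.inl x.1.1) (Sum.inr x.1.2) (Sum.inr z.1.2)
      (by simp) (by simp) (by simpa using hjxz))
    (hDne (Sum.inl x.1.1) (Sum.inr x.1.2) (Sum.inr y.1.2)
      (by simp) (by simp) (by simpa using hjxy))
    ⟨c1, c2, c3⟩

lemma all_j_case {f : Fin n ⊕ Fin m → Pt}
    (hDne : ∀ u v w : Fin n ⊕ Fin m, u ≠ v → u ≠ w → v ≠ w → D (f u) (f v) (f w) ≠ 0)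
    {x y z : (Fin n × Fin m) × (Fin n ⊕ Fin m) × (Fin n ⊕ Fin m)}
    (hcx : cond f x) (hcy : cond f y) (hcz : cond f z)
    (hqxy : phiq x = phiq y) (hqxz : phiq x = phiq z)
    (hjxy : x.1.2 = y.1.2) (hjxz : x.1.2 = z.1.2)
    (hixy : x.1.1 ≠ y.1.1) (hixz : x.1.1 ≠ z.1.1) (hiyz : y.1.1 ≠ z.1.1) : False := by
  have hQxy := quad_eq_of_phiq hqxy
  have hQxz := quad_eq_of_phiq hqxz
  have c1 : Separates (lineThrough (f (Sum.inl y.1.1)) (f (Sum.inl z.1.1)))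
      (f (Sum.inl x.1.1)) (f (Sum.inr x.1.2)) := by
    refine sep_from_tuple hcx ?_ ?_ (by simpa using hiyz)
      (by simpa using Ne.symm hixy) (by simp) (by simpa using Ne.symm hixz) (by simp)
    · rw [hQxy]; exact mem_quad_inl y
    · rw [hQxz]; exact mem_quad_inl z
  have c2 : Separates (lineThrough (f (Sum.inl x.1.1)) (f (Sum.inl z.1.1)))
      (f (Sum.inl y.1.1)) (f (Sum.inr x.1.2)) := by
    rw [hjxy]
    refine sep_from_tuple hcy ?_ ?_ (by simpa using hixz)
      (by simpa using hixy) (by simp) (by simpa using Ne.symm hiyz) (by simp)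
    · rw [← hQxy]; exact mem_quad_inl x
    · rw [← hQxy, hQxz]; exact mem_quad_inl z
  have c3 : Separates (lineThrough (f (Sum.inl x.1.1)) (f (Sum.inl y.1.1)))
      (f (Sum.inl z.1.1)) (f (Sum.inr x.1.2)) := by
    rw [hjxz]
    refine sep_from_tuple hcz ?_ ?_ (by simpa using hixy)
      (by simpa using hixz) (by simp) (by simpa using hiyz) (by simp)
    · rw [← hQxz]; exact mem_quad_inl x
    · rw [← hQxz, hQxy]; exact mem_quad_inl y
  exact noThree31
    (hDne (Sum.inl y.1.1) (Sum.inl z.1.1) (Sum.inr x.1.2)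
      (by simpa using hiyz) (by simp) (by simp))
    (hDne (Sum.inl x.1.1) (Sum.inl z.1.1) (Sum.inr x.1.2)
      (by simpa using hixz) (by simp) (by simp))
    (hDne (Sum.inl x.1.1) (Sum.inl y.1.1) (Sum.inr x.1.2)
      (by simpa using hixy) (by simp) (by simp))
    (hDne (Sum.inl x.1.1) (Sum.inl y.1.1) (Sum.inl z.1.1)
      (by simpa using hixy) (by simpa using hixz) (by simpa using hiyz))
    ⟨c1, c2, c3⟩

lemma corner_case {f : Fin n ⊕ Fin m → Pt}
    (hDne : ∀ u v w : Fin n ⊕ Fin m, u ≠ v → u ≠ w → v ≠ w → D (f u) (f v) (f w) ≠ 0)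
    {x y z : (Fin n × Fin m) × (Fin n ⊕ Fin m) × (Fin n ⊕ Fin m)}
    (hcx : cond f x) (hcy : cond f y) (hcz : cond f z)
    (hqxy : phiq x = phiq y) (hqxz : phiq x = phiq z)
    (h_i : x.1.1 = y.1.1) (h_j : x.1.2 = z.1.2)
    (hβ : x.1.1 ≠ z.1.1) (hδ : x.1.2 ≠ y.1.2) : False := by
  -- α = x.1.1, β = z.1.1, γ = x.1.2, δ = y.1.2
  have hQxy := quad_eq_of_phiq hqxy
  have hQxz := quad_eq_of_phiq hqxz
  have k1 : Separates (lineThrough (f (Sum.inl z.1.1)) (f (Sum.inr y.1.2)))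
      (f (Sum.inl x.1.1)) (f (Sum.inr x.1.2)) := by
    refine sep_from_tuple hcx ?_ ?_ (by simp)
      (by simpa using Ne.symm hβ) (by simp) (by simp) (by simpa using Ne.symm hδ)
    · rw [hQxz]; exact mem_quad_inl z
    · rw [hQxy]; exact mem_quad_inr y
  have k2 : Separates (lineThrough (f (Sum.inl z.1.1)) (f (Sum.inr x.1.2)))
      (f (Sum.inl x.1.1)) (f (Sum.inr y.1.2)) := by
    rw [h_i]
    refine sep_from_tuple hcy ?_ ?_ (by simp)
      (by rw [← h_i]; simpa using Ne.symm hβ) (by simp) (by simp)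
      (by simpa using hδ)
    · rw [← hQxy, hQxz]; exact mem_quad_inl z
    · rw [← hQxy]; exact mem_quad_inr x
  have k3 : Separates (lineThrough (f (Sum.inl x.1.1)) (f (Sum.inr y.1.2)))
      (f (Sum.inl z.1.1)) (f (Sum.inr x.1.2)) := by
    rw [h_j]
    refine sep_from_tuple hcz ?_ ?_ (by simp)
      (by simpa using hβ) (by simp) (by simp)
      (by rw [← h_j]; simpa using Ne.symm hδ)
    · rw [← hQxz]; exact mem_quad_inl x
    · rw [← hQxz, hQxy]; exact mem_quad_inr y
  exact noThree22
    (hDne (Sum.inl z.1.1) (Sum.inr x.1.2) (Sum.inr y.1.2)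
      (by simp) (by simp) (by simpa using hδ))
    (hDne (Sum.inl x.1.1) (Sum.inr x.1.2) (Sum.inr y.1.2)
      (by simp) (by simp) (by simpa using hδ))
    (hDne (Sum.inl x.1.1) (Sum.inl z.1.1) (Sum.inr y.1.2)
      (by simpa using hβ) (by simp) (by simp))
    (hDne (Sum.inl x.1.1) (Sum.inl z.1.1) (Sum.inr x.1.2)
      (by simpa using hβ) (by simp) (by simp))
    ⟨k1, k2, k3⟩

end Count4
end MOCN

namespace MOCN
open Finset
section Count5
variable {n m : ℕ}
open scoped Classical

lemma fiber_le_two (f : Fin n ⊕ Fin m → Pt)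
    (hDne : ∀ u v w : Fin n ⊕ Fin m, u ≠ v → u ≠ w → v ≠ w → D (f u) (f v) (f w) ≠ 0)
    (q : Finset (Fin n) × Finset (Fin m)) :
    ((TT f).filter fun x => phiq x = q).card ≤ 2 := by
  by_contra hlt
  push_neg at hlt
  rcases Finset.two_lt_card_iff.mp hlt with ⟨x, y, z, hx, hy, hz, hxy, hxz, hyz⟩
  rw [mem_filter, TT, mem_filter] at hx hy hz
  obtain ⟨⟨-, hcx⟩, hqx⟩ := hx
  obtain ⟨⟨-, hcy⟩, hqy⟩ := hy
  obtain ⟨⟨-, hcz⟩, hqz⟩ := hz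
  have hqxy : phiq x = phiq y := hqx.trans hqy.symm
  have hqxz : phiq x = phiq z := hqx.trans hqz.symm
  have hqyz : phiq y = phiq z := hqy.trans hqz.symm
  have hQxy := quad_eq_of_phiq hqxy
  have hQxz := quad_eq_of_phiq hqxz
  have hpxy : x.1 ≠ y.1 := fun h => hxy (tuple_eq hcx hcy hqxy h)
  have hpxz : x.1 ≠ z.1 := fun h => hxz (tuple_eq hcx hcz hqxz h)
  have hpyz : y.1 ≠ z.1 := fun h => hyz (tuple_eq hcy hcz hqyz h)
  have hQ4 := quad_card hcx
  -- memberships of all six basic vertices in quadF x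
  have mlx : Sum.inl x.1.1 ∈ quadF x := mem_quad_inl x
  have mrx : Sum.inr x.1.2 ∈ quadF x := mem_quad_inr x
  have mly : Sum.inl y.1.1 ∈ quadF x := by rw [hQxy]; exact mem_quad_inl y
  have mry : Sum.inr y.1.2 ∈ quadF x := by rw [hQxy]; exact mem_quad_inr y
  have mlz : Sum.inl z.1.1 ∈ quadF x := by rw [hQxz]; exact mem_quad_inl z
  have mrz : Sum.inr z.1.2 ∈ quadF x := by rw [hQxz]; exact mem_quad_inr z
  by_cases e1 : x.1.1 = y.1.1
  · by_cases e1' : x.1.1 = z.1.1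
    · -- all i equal
      have hjxy : x.1.2 ≠ y.1.2 := fun h => hpxy (Prod.ext e1 h)
      have hjxz : x.1.2 ≠ z.1.2 := fun h => hpxz (Prod.ext e1' h)
      have hjyz : y.1.2 ≠ z.1.2 := fun h => hpyz (Prod.ext (e1 ▸ e1' : y.1.1 = z.1.1) h)
      exact all_i_case hDne hcx hcy hcz hqxy hqxz e1 e1' hjxy hjxz hjyz
    · -- x,y share i; z has different i
      have hjxy : x.1.2 ≠ y.1.2 := fun h => hpxy (Prod.ext e1 h)
      by_cases e2 : x.1.2 = z.1.2
      · exact corner_case hDne hcx hcy hcz hqxy hqxz e1 e2 e1' hjxy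
      · by_cases e3 : y.1.2 = z.1.2
        · -- corner is y : shares i with x, j with z
          exact corner_case hDne hcy hcx hcz hqxy.symm (hqxy.symm.trans hqxz)
            e1.symm e3 (fun h => e1' (e1.trans h)) (Ne.symm hjxy)
        · -- five distinct vertices
          exact card_five hQ4 mlx mlz mrx mry mrz
            (by simpa using e1') (by simp) (by simp) (by simp)
            (by simp) (by simp) (by simp)
            (by simpa using hjxy) (by simpa using e2) (by simpa using e3)
  · by_cases e2 : x.1.1 = z.1.1
    · -- x,z share i; y different i
      have hjxz : x.1.2 ≠ z.1.2 := fun h => hpxz (Prod.ext e2 h)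
      by_cases e3 : x.1.2 = y.1.2
      · -- corner is x: shares i with z, j with y
        exact corner_case hDne hcx hcz hcy hqxz hqxy e2 e3 e1 hjxz
      · by_cases e4 : z.1.2 = y.1.2
        · -- corner is z: shares i with x, j with y
          exact corner_case hDne hcz hcx hcy hqxz.symm (hqxz.symm.trans hqxy)
            e2.symm e4 (fun h => e1 (e2.trans h)) (Ne.symm hjxz)
        · exact card_five hQ4 mlx mly mrx mrz mry
            (by simpa using e1) (by simp) (by simp) (by simp)
            (by simp) (by simp) (by simp)
            (by simpa using hjxz) (by simpa using e3) (by simpa using e4)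
    · by_cases e3 : y.1.1 = z.1.1
      · -- y,z share i; x different i
        have hjyz : y.1.2 ≠ z.1.2 := fun h => hpyz (Prod.ext e3 h)
        by_cases e4 : y.1.2 = x.1.2
        · -- corner is y: shares i with z, j with x
          exact corner_case hDne hcy hcz hcx (hqxy.symm.trans hqxz) hqxy.symm
            e3 e4 (fun h => e1 h.symm) hjyz
        · by_cases e5 : z.1.2 = x.1.2
          · -- corner is z: shares i with y, j with x
            exact corner_case hDne hcz hcy hcx (hqxz.symm.trans hqxy) hqxz.symm
              e3.symm e5 (fun h => e2 h.symm) (Ne.symm hjyz)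
          · exact card_five hQ4 mly mlx mrx mry mrz
              (by simpa using Ne.symm e1) (by simp) (by simp) (by simp)
              (by simp) (by simp) (by simp)
              (by simpa using Ne.symm e4) (by simpa using Ne.symm e5)
              (by simpa using hjyz)
      · -- all three i distinct; j's not all equal
        have : x.1.2 ≠ y.1.2 ∨ x.1.2 ≠ z.1.2 := by
          by_contra hc
          push_neg at hc
          exact all_j_case hDne hcx hcy hcz hqxy hqxz hc.1 hc.2 e1 e2 e3
        rcases this with h | h
        · exact card_five hQ4 mlx mly mlz mrx mry
            (by simpa using e1) (by simpa using e2) (by simp) (by simp)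
            (by simpa using e3) (by simp) (by simp)
            (by simp) (by simp) (by simpa using h)
        · exact card_five hQ4 mlx mly mlz mrx mrz
            (by simpa using e1) (by simpa using e2) (by simp) (by simp)
            (by simpa using e3) (by simp) (by simp)
            (by simp) (by simp) (by simpa using h)

lemma TT_card_le (f : Fin n ⊕ Fin m → Pt) (hf : IsRectDrawing f) :
    (TT f).card ≤ 2 * (Q24 n m).card := by
  have hDne : ∀ u v w : Fin n ⊕ Fin m, u ≠ v → u ≠ w → v ≠ w →
      D (f u) (f v) (f w) ≠ 0 := by
    intro u v w huv huw hvw h0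
    exact hf.2.2 (f u) ⟨u, rfl⟩ (f v) ⟨v, rfl⟩ (f w) ⟨w, rfl⟩
      (fun h => huv (hf.1 h)) (fun h => huw (hf.1 h)) (fun h => hvw (hf.1 h))
      (collinear_of_D_eq_zero h0)
  calc (TT f).card ≤ 2 * ((TT f).image phiq).card := by
        apply Finset.card_le_mul_card_image
        intro q _
        exact fiber_le_two f hDne q
    _ ≤ 2 * (Q24 n m).card := by
        apply Nat.mul_le_mul_left
        apply Finset.card_le_card
        intro q hq
        rcases Finset.mem_image.mp hq with ⟨x, hx, rfl⟩
        exact phiq_mem_Q24 (Finset.mem_filter.mp hx).2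

end Count5
end MOCN

namespace MOCN
open Finset
section Constr
variable {n m : ℕ}

noncomputable def FF (n m : ℕ) : Fin n ⊕ Fin m → Pt :=
  Sum.elim (fun i => ((i : ℝ), (i : ℝ) ^ 2))
    (fun j => ((j : ℝ), -(3 * ((n : ℝ) + (m : ℝ)) ^ 2) - (j : ℝ) ^ 2))

lemma DAAA_eq (S a b c : ℝ) :
    D (a, a ^ 2) (b, b ^ 2) (c, c ^ 2) = (b - a) * (c - a) * (c - b) := by
  unfold D; ring

lemma DAAB_eq (S a b c : ℝ) :
    D (a, a ^ 2) (b, b ^ 2) (c, -(3 * S ^ 2) - c ^ 2)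
      = -((b - a) * (3 * S ^ 2 + c ^ 2 + a ^ 2 + (a + b) * (c - a))) := by
  unfold D; ring

lemma DABB_eq (S a b c : ℝ) :
    D (a, a ^ 2) (b, -(3 * S ^ 2) - b ^ 2) (c, -(3 * S ^ 2) - c ^ 2)
      = (c - b) * (3 * S ^ 2 + a ^ 2 + a * (b + c) - b * c) := by
  unfold D; ring

lemma DBBB_eq (S a b c : ℝ) :
    D (a, -(3 * S ^ 2) - a ^ 2) (b, -(3 * S ^ 2) - b ^ 2) (c, -(3 * S ^ 2) - c ^ 2)
      = -((b - a) * (c - a) * (c - b)) := by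
  unfold D; ring

lemma AAB_pos {S a b c : ℝ} (h0a : 0 ≤ a) (haS : a < S) (h0b : 0 ≤ b) (hbS : b < S)
    (h0c : 0 ≤ c) (hcS : c < S) :
    0 < 3 * S ^ 2 + c ^ 2 + a ^ 2 + (a + b) * (c - a) := by
  have hS : 0 < S := lt_of_le_of_lt h0a haS
  have h1 : a * a ≤ a * S := mul_le_mul_of_nonneg_left haS.le h0a
  have h2 : a * S < S * S := mul_lt_mul_of_pos_right haS hS
  have h3 : b * b ≤ b * S := mul_le_mul_of_nonneg_left hbS.le h0b
  have h4 : b * S < S * S := mul_lt_mul_of_pos_right hbS hS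
  have h5 : 0 ≤ (a + b) * c := mul_nonneg (add_nonneg h0a h0b) h0c
  nlinarith [sq_nonneg (a - b), sq_nonneg c, sq_nonneg a]

lemma ABB_pos {S a b c : ℝ} (h0a : 0 ≤ a) (haS : a < S) (h0b : 0 ≤ b) (hbS : b < S)
    (h0c : 0 ≤ c) (hcS : c < S) :
    0 < 3 * S ^ 2 + a ^ 2 + a * (b + c) - b * c := by
  have hS : 0 < S := lt_of_le_of_lt h0a haS
  have h1 : b * c ≤ b * S := mul_le_mul_of_nonneg_left hcS.le h0b
  have h2 : b * S < S * S := mul_lt_mul_of_pos_right hbS hS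
  have h3 : 0 ≤ a * (b + c) := mul_nonneg h0a (add_nonneg h0b h0c)
  nlinarith [sq_nonneg a]

lemma boundA (i : Fin n) : (0 : ℝ) ≤ (i : ℝ) ∧ (i : ℝ) < (n : ℝ) + (m : ℝ) := by
  constructor
  · positivity
  · have : (i : ℕ) < n + m := lt_of_lt_of_le i.isLt (Nat.le_add_right n m)
    calc ((i : ℕ) : ℝ) < ((n + m : ℕ) : ℝ) := by exact_mod_cast this
      _ = (n : ℝ) + (m : ℝ) := by push_cast; ring

lemma boundB (j : Fin m) : (0 : ℝ) ≤ (j : ℝ) ∧ (j : ℝ) < (n : ℝ) + (m : ℝ) := by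
  constructor
  · positivity
  · have : (j : ℕ) < n + m := lt_of_lt_of_le j.isLt (Nat.le_add_left m n)
    calc ((j : ℕ) : ℝ) < ((n + m : ℕ) : ℝ) := by exact_mod_cast this
      _ = (n : ℝ) + (m : ℝ) := by push_cast; ring

lemma castA_lt {i i' : Fin n} (h : i < i') : (i : ℝ) < (i' : ℝ) := by
  exact_mod_cast (Fin.lt_iff_val_lt_val.mp h)

lemma castA_ne {i i' : Fin n} (h : i ≠ i') : (i : ℝ) ≠ (i' : ℝ) := by
  intro hc
  exact h (Fin.ext (by exact_mod_cast hc))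

-- D values of the drawing, in canonical position
lemma DFF_AAA (i i' i'' : Fin n) :
    D (FF n m (Sum.inl i)) (FF n m (Sum.inl i')) (FF n m (Sum.inl i''))
      = ((i' : ℝ) - i) * ((i'' : ℝ) - i) * ((i'' : ℝ) - i') := by
  simp only [FF, Sum.elim_inl]
  exact DAAA_eq ((n : ℝ) + m) _ _ _

lemma DFF_BBB (j j' j'' : Fin m) :
    D (FF n m (Sum.inr j)) (FF n m (Sum.inr j')) (FF n m (Sum.inr j''))
      = -(((j' : ℝ) - j) * ((j'' : ℝ) - j) * ((j'' : ℝ) - j')) := by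
  simp only [FF, Sum.elim_inr]
  exact DBBB_eq ((n : ℝ) + m) _ _ _

lemma DFF_AAB_neg {i i' : Fin n} (h : i < i') (j : Fin m) :
    D (FF n m (Sum.inl i)) (FF n m (Sum.inl i')) (FF n m (Sum.inr j)) < 0 := by
  simp only [FF, Sum.elim_inl, Sum.elim_inr]
  rw [DAAB_eq ((n : ℝ) + m)]
  have hpos := AAB_pos (boundA (m := m) i).1 (boundA (m := m) i).2 (boundA (m := m) i').1 (boundA (m := m) i').2
    (boundB (n := n) j).1 (boundB (n := n) j).2
  have := castA_lt h
  nlinarith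

lemma DFF_ABB_pos (i : Fin n) {j j' : Fin m} (h : j < j') :
    0 < D (FF n m (Sum.inl i)) (FF n m (Sum.inr j)) (FF n m (Sum.inr j')) := by
  simp only [FF, Sum.elim_inl, Sum.elim_inr]
  rw [DABB_eq ((n : ℝ) + m)]
  have hpos := ABB_pos (boundA (m := m) i).1 (boundA (m := m) i).2 (boundB (n := n) j).1 (boundB (n := n) j).2
    (boundB (n := n) j').1 (boundB (n := n) j').2
  have : ((j : ℕ) : ℝ) < ((j' : ℕ) : ℝ) := by exact_mod_cast (Fin.lt_iff_val_lt_val.mp h)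
  nlinarith

lemma FF_inj : Function.Injective (FF n m) := by
  have hM : (0 : ℝ) ≤ 3 * ((n : ℝ) + (m : ℝ)) ^ 2 := by positivity
  rintro (i | i) (i' | i') h <;> simp only [FF, Sum.elim_inl, Sum.elim_inr, Prod.mk.injEq] at h
  · exact congrArg Sum.inl (Fin.ext (by exact_mod_cast h.1))
  · exfalso
    have h2 := h.2
    have hp : 0 < n := i.pos
    have h1n : (1 : ℝ) ≤ (n : ℝ) + (m : ℝ) := by
      have : (1 : ℕ) ≤ n + m := by omega
      exact_mod_cast this
    nlinarith [sq_nonneg ((i : ℝ)), sq_nonneg ((i' : ℝ)), sq_nonneg ((n : ℝ) + (m : ℝ) - 1)]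
  · exfalso
    have h2 := h.2
    have hp : 0 < n := i'.pos
    have h1n : (1 : ℝ) ≤ (n : ℝ) + (m : ℝ) := by
      have : (1 : ℕ) ≤ n + m := by omega
      exact_mod_cast this
    nlinarith [sq_nonneg ((i : ℝ)), sq_nonneg ((i' : ℝ)), sq_nonneg ((n : ℝ) + (m : ℝ) - 1)]
  · exact congrArg Sum.inr (Fin.ext (by exact_mod_cast h.1))

lemma D_ne_swap {p q r : Pt} (h : D p r q ≠ 0) : D p q r ≠ 0 := by
  rw [D_swap p q r]; simpa using h
lemma D_ne_swap' {p q r : Pt} (h : D q p r ≠ 0) : D p q r ≠ 0 := by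
  rw [D_swap' p q r]; simpa using h
lemma D_ne_cyc {p q r : Pt} (h : D q r p ≠ 0) : D p q r ≠ 0 := by
  rw [D_cyc p q r]; exact h

lemma DFF_AAB_ne {i i' : Fin n} (h : i ≠ i') (j : Fin m) :
    D (FF n m (Sum.inl i)) (FF n m (Sum.inl i')) (FF n m (Sum.inr j)) ≠ 0 := by
  rcases lt_or_gt_of_ne h with h' | h'
  · exact ne_of_lt (DFF_AAB_neg h' j)
  · exact D_ne_swap' (ne_of_lt (DFF_AAB_neg h' j))

lemma DFF_ABB_ne (i : Fin n) {j j' : Fin m} (h : j ≠ j') :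
    D (FF n m (Sum.inl i)) (FF n m (Sum.inr j)) (FF n m (Sum.inr j')) ≠ 0 := by
  rcases lt_or_gt_of_ne h with h' | h'
  · exact ne_of_gt (DFF_ABB_pos i h')
  · exact D_ne_swap (ne_of_gt (DFF_ABB_pos i h'))

lemma DFF_ne {u v w : Fin n ⊕ Fin m} (huv : u ≠ v) (huw : u ≠ w) (hvw : v ≠ w) :
    D (FF n m u) (FF n m v) (FF n m w) ≠ 0 := by
  rcases u with i | i <;> rcases v with i' | i' <;> rcases w with i'' | i''
  · -- AAA
    rw [DFF_AAA]
    have h1 : (i : ℝ) ≠ i' := castA_ne (by simpa using huv)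
    have h2 : (i : ℝ) ≠ i'' := castA_ne (by simpa using huw)
    have h3 : (i' : ℝ) ≠ i'' := castA_ne (by simpa using hvw)
    exact mul_ne_zero (mul_ne_zero (sub_ne_zero.mpr (Ne.symm h1)) (sub_ne_zero.mpr (Ne.symm h2)))
      (sub_ne_zero.mpr (Ne.symm h3))
  · exact DFF_AAB_ne (by simpa using huv) i''
  · exact D_ne_swap (DFF_AAB_ne (by simpa using huw) i')
  · exact DFF_ABB_ne i (by simpa using hvw)
  · exact D_ne_cyc (DFF_AAB_ne (by simpa using hvw) i)
  · exact D_ne_cyc (DFF_ABB_ne i' (by simpa using (Ne.symm huw)))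
  · exact D_ne_cyc (D_ne_cyc (DFF_ABB_ne i'' (by simpa using huv)))
  · -- BBB
    rw [DFF_BBB]
    have h1 : i ≠ i' := by simpa using huv
    have h2 : i ≠ i'' := by simpa using huw
    have h3 : i' ≠ i'' := by simpa using hvw
    have e1 : ((i : ℕ) : ℝ) ≠ ((i' : ℕ) : ℝ) := fun hc => h1 (Fin.ext (by exact_mod_cast hc))
    have e2 : ((i : ℕ) : ℝ) ≠ ((i'' : ℕ) : ℝ) := fun hc => h2 (Fin.ext (by exact_mod_cast hc))
    have e3 : ((i' : ℕ) : ℝ) ≠ ((i'' : ℕ) : ℝ) := fun hc => h3 (Fin.ext (by exact_mod_cast hc))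
    intro hc
    rw [neg_eq_zero] at hc
    rcases mul_eq_zero.mp hc with hc' | hc'
    · rcases mul_eq_zero.mp hc' with hc'' | hc''
      · exact e1 (sub_eq_zero.mp hc'').symm
      · exact e2 (sub_eq_zero.mp hc'').symm
    · exact e3 (sub_eq_zero.mp hc').symm

lemma FF_drawing : IsRectDrawing (FF n m) := by
  refine ⟨FF_inj, Set.finite_range _, ?_⟩
  rintro p ⟨u, rfl⟩ q ⟨v, rfl⟩ r ⟨w, rfl⟩ hpq hpr hqr
  exact notCollinear_of_D (DFF_ne (fun h => hpq (congrArg (FF n m) h))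
    (fun h => hpr (congrArg (FF n m) h)) (fun h => hqr (congrArg (FF n m) h)))

end Constr
end MOCN

namespace MOCN
open Finset
section Fib
variable {n m : ℕ}
open scoped Classical

lemma psi_inl_inr (i : Fin n) (j : Fin m) :
    psi (n := n) (m := m) (Sum.inl i) < psi (n := n) (m := m) (Sum.inr j) := by
  have := i.isLt
  simp only [psi, Sum.elim_inl, Sum.elim_inr]
  omega

lemma psi_inl_inl {i i' : Fin n} (h : i < i') :
    psi (n := n) (m := m) (Sum.inl i) < psi (n := n) (m := m) (Sum.inl i') := by
  simpa [psi] using h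

lemma psi_inr_inr {j j' : Fin m} (h : j < j') :
    psi (n := n) (m := m) (Sum.inr j) < psi (n := n) (m := m) (Sum.inr j') := by
  simp only [psi, Sum.elim_inr]
  omega

lemma tuple_resolve {f : Fin n ⊕ Fin m → Pt} {x} (hc : cond f x)
    {c d : Fin n ⊕ Fin m}
    (hcq : c ∈ quadF x) (hdq : d ∈ quadF x) (hcd : c ≠ d)
    (h1 : c ≠ Sum.inl x.1.1) (h2 : c ≠ Sum.inr x.1.2)
    (h3 : d ≠ Sum.inl x.1.1) (h4 : d ≠ Sum.inr x.1.2)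
    (hpsi : psi c < psi d) :
    x.2.1 = c ∧ x.2.2 = d := by
  rcases pair_complement hc hcq hdq hcd h1 h2 h3 h4 with ⟨e1, e2⟩ | ⟨e1, e2⟩
  · exact ⟨e1, e2⟩
  · exfalso
    have := hc.1
    rw [e1, e2] at this
    exact lt_asymm this hpsi

lemma mem_TT_iff {f : Fin n ⊕ Fin m → Pt} {x} : x ∈ TT f ↔ cond f x := by
  simp [TT]

lemma phiq_eval (i : Fin n) (j : Fin m) (i' : Fin n) (j' : Fin m) :
    phiq ((i, j), (Sum.inl i', Sum.inr j')) = ({i, i'}, {j, j'}) := by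
  refine Prod.ext ?_ ?_ <;> ext a <;> simp [phiq, quadF]

lemma phiq_eval_ll (i : Fin n) (j : Fin m) (a b : Fin n) :
    phiq ((i, j), ((Sum.inl a : Fin n ⊕ Fin m), Sum.inl b)) = ({i, a, b}, {j}) := by
  refine Prod.ext ?_ ?_ <;> ext c <;> simp [phiq, quadF]

lemma phiq_eval_rr (i : Fin n) (j : Fin m) (a b : Fin m) :
    phiq ((i, j), ((Sum.inr a : Fin n ⊕ Fin m), Sum.inr b)) = ({i}, {j, a, b}) := by
  refine Prod.ext ?_ ?_ <;> ext c <;> simp [phiq, quadF]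

lemma fiber22 (f : Fin n ⊕ Fin m → Pt) {i1 i2 : Fin n} {j1 j2 : Fin m}
    (hi : i1 < i2) (hj : j1 < j2)
    (s1 : Separates (lineThrough (f (Sum.inl i2)) (f (Sum.inr j1)))
      (f (Sum.inl i1)) (f (Sum.inr j2)))
    (s2 : Separates (lineThrough (f (Sum.inl i1)) (f (Sum.inr j2)))
      (f (Sum.inl i2)) (f (Sum.inr j1)))
    (ns3 : ¬ Separates (lineThrough (f (Sum.inl i2)) (f (Sum.inr j2)))
      (f (Sum.inl i1)) (f (Sum.inr j1)))
    (ns4 : ¬ Separates (lineThrough (f (Sum.inl i1)) (f (Sum.inr j1)))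
      (f (Sum.inl i2)) (f (Sum.inr j2))) :
    (TT f).filter (fun x => phiq x = ({i1, i2}, {j1, j2})) =
      {((i1, j2), (Sum.inl i2, Sum.inr j1)), ((i2, j1), (Sum.inl i1, Sum.inr j2))} := by
  have hine : i1 ≠ i2 := ne_of_lt hi
  have hjne : j1 ≠ j2 := ne_of_lt hj
  ext x
  simp only [mem_filter, mem_insert, mem_singleton]
  constructor
  · rintro ⟨hxT, hq⟩
    have hc : cond f x := mem_TT_iff.mp hxT
    have hq1 : (phiq x).1 = {i1, i2} := congrArg Prod.fst hq
    have hq2 : (phiq x).2 = {j1, j2} := congrArg Prod.snd hq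
    have hquad : quadF x =
        ({Sum.inl i1, Sum.inl i2, Sum.inr j1, Sum.inr j2} : Finset (Fin n ⊕ Fin m)) := by
      ext v
      rcases v with a | b
      · rw [← mem_phiq_fst (x := x), hq1]; simp
      · rw [← mem_phiq_snd (x := x), hq2]; simp
    have hx1 : x.1.1 = i1 ∨ x.1.1 = i2 := by
      have := mem_phiq_fst.mpr (mem_quad_inl x)
      rw [hq1] at this
      simpa using this
    have hx2 : x.1.2 = j1 ∨ x.1.2 = j2 := by
      have := mem_phiq_snd.mpr (mem_quad_inr x)
      rw [hq2] at this
      simpa using this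
    rcases hx1 with h1 | h1 <;> rcases hx2 with h2 | h2
    · -- (i1, j1) : excluded by ns3
      exfalso
      have hres := tuple_resolve hc (c := Sum.inl i2) (d := Sum.inr j2)
        (by rw [hquad]; simp) (by rw [hquad]; simp) (by simp)
        (by rw [h1]; simp [Ne.symm hine]) (by simp)
        (by simp) (by rw [h2]; simp [Ne.symm hjne])
        (psi_inl_inr _ _)
      have hsep := hc.2.2.2.2.2
      rw [hres.1, hres.2, h1, h2] at hsep
      exact ns3 hsep
    · -- (i1, j2) : tuple t1
      left
      have hres := tuple_resolve hc (c := Sum.inl i2) (d := Sum.inr j1)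
        (by rw [hquad]; simp) (by rw [hquad]; simp) (by simp)
        (by rw [h1]; simp [Ne.symm hine]) (by simp)
        (by simp) (by rw [h2]; simp [hjne])
        (psi_inl_inr _ _)
      obtain ⟨⟨a, b⟩, u, v⟩ := x
      simp only at h1 h2 hres
      simp [h1, h2, hres.1, hres.2]
    · -- (i2, j1) : tuple t2
      right
      have hres := tuple_resolve hc (c := Sum.inl i1) (d := Sum.inr j2)
        (by rw [hquad]; simp) (by rw [hquad]; simp) (by simp)
        (by rw [h1]; simp [hine]) (by simp)
        (by simp) (by rw [h2]; simp [Ne.symm hjne])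
        (psi_inl_inr _ _)
      obtain ⟨⟨a, b⟩, u, v⟩ := x
      simp only at h1 h2 hres
      simp [h1, h2, hres.1, hres.2]
    · -- (i2, j2) : excluded by ns4
      exfalso
      have hres := tuple_resolve hc (c := Sum.inl i1) (d := Sum.inr j1)
        (by rw [hquad]; simp) (by rw [hquad]; simp) (by simp)
        (by rw [h1]; simp [hine]) (by simp)
        (by simp) (by rw [h2]; simp [hjne])
        (psi_inl_inr _ _)
      have hsep := hc.2.2.2.2.2
      rw [hres.1, hres.2, h1, h2] at hsep
      exact ns4 hsep
  · intro hx
    rcases hx with rfl | rfl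
    · refine ⟨mem_TT_iff.mpr ?_, ?_⟩
      · exact ⟨psi_inl_inr _ _, by simp [Ne.symm hine], by simp, by simp, by simp [hjne], s1⟩
      · rw [phiq_eval, Finset.pair_comm j2 j1]
    · refine ⟨mem_TT_iff.mpr ?_, ?_⟩
      · exact ⟨psi_inl_inr _ _, by simp [hine], by simp, by simp, by simp [Ne.symm hjne], s2⟩
      · rw [phiq_eval, Finset.pair_comm i2 i1]

end Fib
end MOCN

namespace MOCN
open Finset
section Fib2
variable {n m : ℕ}
open scoped Classical

lemma fiber31 (f : Fin n ⊕ Fin m → Pt) {i1 i2 i3 : Fin n} {j : Fin m}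
    (h12 : i1 < i2) (h23 : i2 < i3)
    (s1 : Separates (lineThrough (f (Sum.inl i2)) (f (Sum.inl i3)))
      (f (Sum.inl i1)) (f (Sum.inr j)))
    (s2 : Separates (lineThrough (f (Sum.inl i1)) (f (Sum.inl i2)))
      (f (Sum.inl i3)) (f (Sum.inr j)))
    (ns3 : ¬ Separates (lineThrough (f (Sum.inl i1)) (f (Sum.inl i3)))
      (f (Sum.inl i2)) (f (Sum.inr j))) :
    (TT f).filter (fun x => phiq x = ({i1, i2, i3}, {j})) =
      {((i1, j), (Sum.inl i2, Sum.inl i3)), ((i3, j), (Sum.inl i1, Sum.inl i2))} := by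
  have h13 : i1 < i3 := h12.trans h23
  have e12 : i1 ≠ i2 := ne_of_lt h12
  have e13 : i1 ≠ i3 := ne_of_lt h13
  have e23 : i2 ≠ i3 := ne_of_lt h23
  ext x
  simp only [mem_filter, mem_insert, mem_singleton]
  constructor
  · rintro ⟨hxT, hq⟩
    have hc : cond f x := mem_TT_iff.mp hxT
    have hq1 : (phiq x).1 = {i1, i2, i3} := congrArg Prod.fst hq
    have hq2 : (phiq x).2 = {j} := congrArg Prod.snd hq
    have hquad : quadF x =
        ({Sum.inl i1, Sum.inl i2, Sum.inl i3, Sum.inr j} : Finset (Fin n ⊕ Fin m)) := by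
      ext v
      rcases v with a | b
      · rw [← mem_phiq_fst (x := x), hq1]; simp
      · rw [← mem_phiq_snd (x := x), hq2]; simp
    have hx1 : x.1.1 = i1 ∨ x.1.1 = i2 ∨ x.1.1 = i3 := by
      have := mem_phiq_fst.mpr (mem_quad_inl x)
      rw [hq1] at this
      simpa using this
    have hx2 : x.1.2 = j := by
      have := mem_phiq_snd.mpr (mem_quad_inr x)
      rw [hq2] at this
      simpa using this
    rcases hx1 with h1 | h1 | h1
    · left
      have hres := tuple_resolve hc (c := Sum.inl i2) (d := Sum.inl i3)
        (by rw [hquad]; simp) (by rw [hquad]; simp) (by simp [e23])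
        (by rw [h1]; simp [Ne.symm e12]) (by simp)
        (by rw [h1]; simp [Ne.symm e13]) (by simp)
        (psi_inl_inl h23)
      obtain ⟨⟨a, b⟩, u, v⟩ := x
      simp only at h1 hx2 hres
      simp [h1, hx2, hres.1, hres.2]
    · exfalso
      have hres := tuple_resolve hc (c := Sum.inl i1) (d := Sum.inl i3)
        (by rw [hquad]; simp) (by rw [hquad]; simp) (by simp [e13])
        (by rw [h1]; simp [e12]) (by simp)
        (by rw [h1]; simp [Ne.symm e23]) (by simp)
        (psi_inl_inl h13)
      have hsep := hc.2.2.2.2.2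
      rw [hres.1, hres.2, h1, hx2] at hsep
      exact ns3 hsep
    · right
      have hres := tuple_resolve hc (c := Sum.inl i1) (d := Sum.inl i2)
        (by rw [hquad]; simp) (by rw [hquad]; simp) (by simp [e12])
        (by rw [h1]; simp [e13]) (by simp)
        (by rw [h1]; simp [e23]) (by simp)
        (psi_inl_inl h12)
      obtain ⟨⟨a, b⟩, u, v⟩ := x
      simp only at h1 hx2 hres
      simp [h1, hx2, hres.1, hres.2]
  · intro hx
    rcases hx with rfl | rfl
    · refine ⟨mem_TT_iff.mpr ?_, ?_⟩
      · exact ⟨psi_inl_inl h23, by simp [Ne.symm e12], by simp, by simp [Ne.symm e13],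
          by simp, s1⟩
      · rw [phiq_eval_ll]
    · refine ⟨mem_TT_iff.mpr ?_, ?_⟩
      · exact ⟨psi_inl_inl h12, by simp [e13], by simp, by simp [e23], by simp, s2⟩
      · rw [phiq_eval_ll]
        have : ({i3, i1, i2} : Finset (Fin n)) = {i1, i2, i3} := by
          ext a; simp; tauto
        rw [this]

lemma fiber13 (f : Fin n ⊕ Fin m → Pt) {i : Fin n} {j1 j2 j3 : Fin m}
    (h12 : j1 < j2) (h23 : j2 < j3)
    (s1 : Separates (lineThrough (f (Sum.inr j2)) (f (Sum.inr j3)))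
      (f (Sum.inl i)) (f (Sum.inr j1)))
    (s2 : Separates (lineThrough (f (Sum.inr j1)) (f (Sum.inr j2)))
      (f (Sum.inl i)) (f (Sum.inr j3)))
    (ns3 : ¬ Separates (lineThrough (f (Sum.inr j1)) (f (Sum.inr j3)))
      (f (Sum.inl i)) (f (Sum.inr j2))) :
    (TT f).filter (fun x => phiq x = ({i}, {j1, j2, j3})) =
      {((i, j1), (Sum.inr j2, Sum.inr j3)), ((i, j3), (Sum.inr j1, Sum.inr j2))} := by
  have h13 : j1 < j3 := h12.trans h23
  have e12 : j1 ≠ j2 := ne_of_lt h12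
  have e13 : j1 ≠ j3 := ne_of_lt h13
  have e23 : j2 ≠ j3 := ne_of_lt h23
  ext x
  simp only [mem_filter, mem_insert, mem_singleton]
  constructor
  · rintro ⟨hxT, hq⟩
    have hc : cond f x := mem_TT_iff.mp hxT
    have hq1 : (phiq x).1 = {i} := congrArg Prod.fst hq
    have hq2 : (phiq x).2 = {j1, j2, j3} := congrArg Prod.snd hq
    have hquad : quadF x =
        ({Sum.inl i, Sum.inr j1, Sum.inr j2, Sum.inr j3} : Finset (Fin n ⊕ Fin m)) := by
      ext v
      rcases v with a | b
      · rw [← mem_phiq_fst (x := x), hq1]; simp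
      · rw [← mem_phiq_snd (x := x), hq2]; simp
    have hx1 : x.1.1 = i := by
      have := mem_phiq_fst.mpr (mem_quad_inl x)
      rw [hq1] at this
      simpa using this
    have hx2 : x.1.2 = j1 ∨ x.1.2 = j2 ∨ x.1.2 = j3 := by
      have := mem_phiq_snd.mpr (mem_quad_inr x)
      rw [hq2] at this
      simpa using this
    rcases hx2 with h2 | h2 | h2
    · left
      have hres := tuple_resolve hc (c := Sum.inr j2) (d := Sum.inr j3)
        (by rw [hquad]; simp) (by rw [hquad]; simp) (by simp [e23])
        (by simp) (by rw [h2]; simp [Ne.symm e12])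
        (by simp) (by rw [h2]; simp [Ne.symm e13])
        (psi_inr_inr h23)
      obtain ⟨⟨a, b⟩, u, v⟩ := x
      simp only at h2 hx1 hres
      simp [h2, hx1, hres.1, hres.2]
    · exfalso
      have hres := tuple_resolve hc (c := Sum.inr j1) (d := Sum.inr j3)
        (by rw [hquad]; simp) (by rw [hquad]; simp) (by simp [e13])
        (by simp) (by rw [h2]; simp [e12])
        (by simp) (by rw [h2]; simp [Ne.symm e23])
        (psi_inr_inr h13)
      have hsep := hc.2.2.2.2.2
      rw [hres.1, hres.2, h2, hx1] at hsep
      exact ns3 hsep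
    · right
      have hres := tuple_resolve hc (c := Sum.inr j1) (d := Sum.inr j2)
        (by rw [hquad]; simp) (by rw [hquad]; simp) (by simp [e12])
        (by simp) (by rw [h2]; simp [e13])
        (by simp) (by rw [h2]; simp [e23])
        (psi_inr_inr h12)
      obtain ⟨⟨a, b⟩, u, v⟩ := x
      simp only at h2 hx1 hres
      simp [h2, hx1, hres.1, hres.2]
  · intro hx
    rcases hx with rfl | rfl
    · refine ⟨mem_TT_iff.mpr ?_, ?_⟩
      · exact ⟨psi_inr_inr h23, by simp, by simp [Ne.symm e12], by simp,
          by simp [Ne.symm e13], s1⟩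
      · rw [phiq_eval_rr]
    · refine ⟨mem_TT_iff.mpr ?_, ?_⟩
      · exact ⟨psi_inr_inr h12, by simp, by simp [e13], by simp, by simp [e23], s2⟩
      · rw [phiq_eval_rr]
        have : ({j3, j1, j2} : Finset (Fin m)) = {j1, j2, j3} := by
          ext a; simp; tauto
        rw [this]

end Fib2
end MOCN

namespace MOCN
open Finset
section Final
variable {n m : ℕ}
open scoped Classical

lemma D_cyc2 (p q r : Pt) : D p q r = D r p q := by unfold D; ring

lemma exists_sorted_two {k : ℕ} {s : Finset (Fin k)} (h : s.card = 2) :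
    ∃ a b, a < b ∧ s = {a, b} := by
  obtain ⟨x, y, hxy, rfl⟩ := Finset.card_eq_two.mp h
  rcases lt_or_gt_of_ne hxy with h' | h'
  · exact ⟨x, y, h', rfl⟩
  · exact ⟨y, x, h', Finset.pair_comm x y⟩

lemma exists_sorted_three {k : ℕ} {s : Finset (Fin k)} (h : s.card = 3) :
    ∃ a b c, a < b ∧ b < c ∧ s = {a, b, c} := by
  obtain ⟨x, y, z, hxy, hxz, hyz, rfl⟩ := Finset.card_eq_three.mp h
  have perm : ∀ a b c : Fin k, ({a, b, c} : Finset (Fin k)) = {x, y, z} →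
      ({x, y, z} : Finset (Fin k)) = {a, b, c} := fun a b c h' => h'.symm
  rcases lt_trichotomy x y with h1 | h1 | h1
  · rcases lt_trichotomy y z with h2 | h2 | h2
    · exact ⟨x, y, z, h1, h2, rfl⟩
    · exact absurd h2 hyz
    · rcases lt_trichotomy x z with h3 | h3 | h3
      · exact ⟨x, z, y, h3, h2, by ext a; simp; tauto⟩
      · exact absurd h3 hxz
      · exact ⟨z, x, y, h3, h1, by ext a; simp; tauto⟩
  · exact absurd h1 hxy
  · rcases lt_trichotomy x z with h2 | h2 | h2
    · exact ⟨y, x, z, h1, h2, by ext a; simp; tauto⟩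
    · exact absurd h2 hxz
    · rcases lt_trichotomy y z with h3 | h3 | h3
      · exact ⟨y, z, x, h3, h2, by ext a; simp; tauto⟩
      · exact absurd h3 hyz
      · exact ⟨z, y, x, h3, h1, by ext a; simp; tauto⟩

lemma FF_neq {u v : Fin n ⊕ Fin m} (h : u ≠ v) : FF n m u ≠ FF n m v :=
  fun hc => h (FF_inj hc)

lemma fiber_FF_card (q : Finset (Fin n) × Finset (Fin m)) (hq : q ∈ Q24 n m) :
    ((TT (FF n m)).filter fun x => phiq x = q).card = 2 := by
  set f := FF n m with hf
  obtain ⟨sA, sB⟩ := q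
  simp only [Q24, mem_union, Finset.mem_product, Finset.mem_powersetCard] at hq
  rcases hq with (⟨⟨-, hA⟩, ⟨-, hB⟩⟩ | ⟨⟨-, hA⟩, ⟨-, hB⟩⟩) | ⟨⟨-, hA⟩, ⟨-, hB⟩⟩
  · -- shape (2,2)
    obtain ⟨i1, i2, hi, rfl⟩ := exists_sorted_two hA
    obtain ⟨j1, j2, hj, rfl⟩ := exists_sorted_two hB
    have hi' := castA_lt hi
    have hj' := castA_lt hj
    have d1 : D (f (Sum.inl i1)) (f (Sum.inl i2)) (f (Sum.inr j1)) < 0 := DFF_AAB_neg hi j1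
    have d2 : D (f (Sum.inl i1)) (f (Sum.inl i2)) (f (Sum.inr j2)) < 0 := DFF_AAB_neg hi j2
    have d3 : 0 < D (f (Sum.inl i1)) (f (Sum.inr j1)) (f (Sum.inr j2)) := DFF_ABB_pos i1 hj
    have d4 : 0 < D (f (Sum.inl i2)) (f (Sum.inr j1)) (f (Sum.inr j2)) := DFF_ABB_pos i2 hj
    have s1 : Separates (lineThrough (f (Sum.inl i2)) (f (Sum.inr j1)))
        (f (Sum.inl i1)) (f (Sum.inr j2)) := by
      rw [sep_iff (FF_neq (by simp))]
      rw [show D (f (Sum.inl i2)) (f (Sum.inr j1)) (f (Sum.inl i1))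
          = D (f (Sum.inl i1)) (f (Sum.inl i2)) (f (Sum.inr j1)) from D_cyc2 _ _ _]
      rw [show D (f (Sum.inl i2)) (f (Sum.inr j1)) (f (Sum.inr j2))
          = D (f (Sum.inl i2)) (f (Sum.inr j1)) (f (Sum.inr j2)) from rfl]
      exact mul_neg_of_neg_of_pos d1 d4
    have s2 : Separates (lineThrough (f (Sum.inl i1)) (f (Sum.inr j2)))
        (f (Sum.inl i2)) (f (Sum.inr j1)) := by
      rw [sep_iff (FF_neq (by simp))]
      rw [show D (f (Sum.inl i1)) (f (Sum.inr j2)) (f (Sum.inl i2))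
          = -D (f (Sum.inl i1)) (f (Sum.inl i2)) (f (Sum.inr j2)) from D_swap _ _ _]
      rw [show D (f (Sum.inl i1)) (f (Sum.inr j2)) (f (Sum.inr j1))
          = -D (f (Sum.inl i1)) (f (Sum.inr j1)) (f (Sum.inr j2)) from D_swap _ _ _]
      nlinarith
    have ns3 : ¬ Separates (lineThrough (f (Sum.inl i2)) (f (Sum.inr j2)))
        (f (Sum.inl i1)) (f (Sum.inr j1)) := by
      rw [sep_iff (FF_neq (by simp))]
      rw [show D (f (Sum.inl i2)) (f (Sum.inr j2)) (f (Sum.inl i1))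
          = D (f (Sum.inl i1)) (f (Sum.inl i2)) (f (Sum.inr j2)) from D_cyc2 _ _ _]
      rw [show D (f (Sum.inl i2)) (f (Sum.inr j2)) (f (Sum.inr j1))
          = -D (f (Sum.inl i2)) (f (Sum.inr j1)) (f (Sum.inr j2)) from D_swap _ _ _]
      push_neg
      nlinarith
    have ns4 : ¬ Separates (lineThrough (f (Sum.inl i1)) (f (Sum.inr j1)))
        (f (Sum.inl i2)) (f (Sum.inr j2)) := by
      rw [sep_iff (FF_neq (by simp))]
      rw [show D (f (Sum.inl i1)) (f (Sum.inr j1)) (f (Sum.inl i2))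
          = -D (f (Sum.inl i1)) (f (Sum.inl i2)) (f (Sum.inr j1)) from D_swap _ _ _]
      push_neg
      nlinarith
    rw [fiber22 f hi hj s1 s2 ns3 ns4]
    rw [card_insert_of_notMem (by
      intro hmem
      rw [mem_singleton] at hmem
      exact (ne_of_lt hi) (congrArg (fun t => t.1.1) hmem)), card_singleton]
  · -- shape (3,1)
    obtain ⟨i1, i2, i3, h12, h23, rfl⟩ := exists_sorted_three hA
    obtain ⟨j, rfl⟩ := Finset.card_eq_one.mp hB
    have h13 := h12.trans h23
    have c12 := castA_lt h12
    have c23 := castA_lt h23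
    have c13 := castA_lt h13
    have a231 : 0 < D (f (Sum.inl i2)) (f (Sum.inl i3)) (f (Sum.inl i1)) := by
      rw [show f = FF n m from rfl, DFF_AAA]
      nlinarith [mul_pos (sub_pos.mpr c23) (mul_pos_of_neg_of_neg (sub_neg.mpr c12) (sub_neg.mpr c13))]
    have a123 : 0 < D (f (Sum.inl i1)) (f (Sum.inl i2)) (f (Sum.inl i3)) := by
      rw [show f = FF n m from rfl, DFF_AAA]
      nlinarith [mul_pos (mul_pos (sub_pos.mpr c12) (sub_pos.mpr c13)) (sub_pos.mpr c23)]
    have a132 : D (f (Sum.inl i1)) (f (Sum.inl i3)) (f (Sum.inl i2)) < 0 := by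
      rw [show f = FF n m from rfl, DFF_AAA]
      nlinarith [mul_neg_of_pos_of_neg (mul_pos (sub_pos.mpr c13) (sub_pos.mpr c12)) (sub_neg.mpr c23)]
    have b23 : D (f (Sum.inl i2)) (f (Sum.inl i3)) (f (Sum.inr j)) < 0 := DFF_AAB_neg h23 j
    have b12 : D (f (Sum.inl i1)) (f (Sum.inl i2)) (f (Sum.inr j)) < 0 := DFF_AAB_neg h12 j
    have b13 : D (f (Sum.inl i1)) (f (Sum.inl i3)) (f (Sum.inr j)) < 0 := DFF_AAB_neg h13 j
    have s1 : Separates (lineThrough (f (Sum.inl i2)) (f (Sum.inl i3)))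
        (f (Sum.inl i1)) (f (Sum.inr j)) := by
      rw [sep_iff (FF_neq (by simp [ne_of_lt h23]))]
      exact mul_neg_of_pos_of_neg a231 b23
    have s2 : Separates (lineThrough (f (Sum.inl i1)) (f (Sum.inl i2)))
        (f (Sum.inl i3)) (f (Sum.inr j)) := by
      rw [sep_iff (FF_neq (by simp [ne_of_lt h12]))]
      exact mul_neg_of_pos_of_neg a123 b12
    have ns3 : ¬ Separates (lineThrough (f (Sum.inl i1)) (f (Sum.inl i3)))
        (f (Sum.inl i2)) (f (Sum.inr j)) := by
      rw [sep_iff (FF_neq (by simp [ne_of_lt h13]))]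
      push_neg
      nlinarith
    rw [fiber31 f h12 h23 s1 s2 ns3]
    rw [card_insert_of_notMem (by
      intro hmem
      rw [mem_singleton] at hmem
      exact (ne_of_lt h13) (congrArg (fun t => t.1.1) hmem)), card_singleton]
  · -- shape (1,3)
    obtain ⟨i, rfl⟩ := Finset.card_eq_one.mp hA
    obtain ⟨j1, j2, j3, h12, h23, rfl⟩ := exists_sorted_three hB
    have h13 := h12.trans h23
    have c12 := castA_lt h12
    have c23 := castA_lt h23
    have c13 := castA_lt h13
    have p23 : 0 < D (f (Sum.inl i)) (f (Sum.inr j2)) (f (Sum.inr j3)) := DFF_ABB_pos i h23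
    have p12 : 0 < D (f (Sum.inl i)) (f (Sum.inr j1)) (f (Sum.inr j2)) := DFF_ABB_pos i h12
    have p13 : 0 < D (f (Sum.inl i)) (f (Sum.inr j1)) (f (Sum.inr j3)) := DFF_ABB_pos i h13
    have q231 : D (f (Sum.inr j2)) (f (Sum.inr j3)) (f (Sum.inr j1)) < 0 := by
      rw [show f = FF n m from rfl, DFF_BBB]
      nlinarith [mul_pos (sub_pos.mpr c23) (mul_pos_of_neg_of_neg (sub_neg.mpr c12) (sub_neg.mpr c13))]
    have q123 : D (f (Sum.inr j1)) (f (Sum.inr j2)) (f (Sum.inr j3)) < 0 := by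
      rw [show f = FF n m from rfl, DFF_BBB]
      nlinarith [mul_pos (mul_pos (sub_pos.mpr c12) (sub_pos.mpr c13)) (sub_pos.mpr c23)]
    have q132 : 0 < D (f (Sum.inr j1)) (f (Sum.inr j3)) (f (Sum.inr j2)) := by
      rw [show f = FF n m from rfl, DFF_BBB]
      nlinarith [mul_neg_of_pos_of_neg (mul_pos (sub_pos.mpr c13) (sub_pos.mpr c12)) (sub_neg.mpr c23)]
    have s1 : Separates (lineThrough (f (Sum.inr j2)) (f (Sum.inr j3)))
        (f (Sum.inl i)) (f (Sum.inr j1)) := by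
      rw [sep_iff (FF_neq (by simp [ne_of_lt h23]))]
      rw [show D (f (Sum.inr j2)) (f (Sum.inr j3)) (f (Sum.inl i))
          = D (f (Sum.inl i)) (f (Sum.inr j2)) (f (Sum.inr j3)) from (D_cyc _ _ _).symm]
      exact mul_neg_of_pos_of_neg p23 q231
    have s2 : Separates (lineThrough (f (Sum.inr j1)) (f (Sum.inr j2)))
        (f (Sum.inl i)) (f (Sum.inr j3)) := by
      rw [sep_iff (FF_neq (by simp [ne_of_lt h12]))]
      rw [show D (f (Sum.inr j1)) (f (Sum.inr j2)) (f (Sum.inl i))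
          = D (f (Sum.inl i)) (f (Sum.inr j1)) (f (Sum.inr j2)) from (D_cyc _ _ _).symm]
      exact mul_neg_of_pos_of_neg p12 q123
    have ns3 : ¬ Separates (lineThrough (f (Sum.inr j1)) (f (Sum.inr j3)))
        (f (Sum.inl i)) (f (Sum.inr j2)) := by
      rw [sep_iff (FF_neq (by simp [ne_of_lt h13]))]
      rw [show D (f (Sum.inr j1)) (f (Sum.inr j3)) (f (Sum.inl i))
          = D (f (Sum.inl i)) (f (Sum.inr j1)) (f (Sum.inr j3)) from (D_cyc _ _ _).symm]
      push_neg
      nlinarith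
    rw [fiber13 f h12 h23 s1 s2 ns3]
    rw [card_insert_of_notMem (by
      intro hmem
      rw [mem_singleton] at hmem
      exact (ne_of_lt h13) (congrArg (fun t => t.1.2) hmem)), card_singleton]

lemma TT_FF_card : (TT (FF n m)).card = 2 * (Q24 n m).card := by
  rw [Finset.card_eq_sum_card_fiberwise
    (f := phiq) (t := Q24 n m) (fun x hx => phiq_mem_Q24 (mem_TT_iff.mp hx))]
  rw [Finset.sum_congr rfl (fun q hq => fiber_FF_card q hq)]
  rw [Finset.sum_const, smul_eq_mul, mul_comm]

end Final
end MOCN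

-- SENTINEL_MORE

/-- For n, m ≥ 1,
`MOCN(K_{n,m}) = 2 C(n,2) C(m,2) + 2m C(n,3) + 2n C(m,3)`. -/
theorem stmt_11 (n m : ℕ) (hn : 1 ≤ n) (hm : 1 ≤ m) :
    MOCN (completeBipartiteGraph (Fin n) (Fin m)) =
      2 * Nat.choose n 2 * Nat.choose m 2 +
        2 * m * Nat.choose n 3 + 2 * n * Nat.choose m 3 := by
  classical
  set G := completeBipartiteGraph (Fin n) (Fin m) with hG
  set val := 2 * Nat.choose n 2 * Nat.choose m 2 +
    2 * m * Nat.choose n 3 + 2 * n * Nat.choose m 3 with hval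
  have hmem : val ∈ {k | ∃ f : Fin n ⊕ Fin m → Pt,
      IsRectDrawing f ∧ drawingCrossings G f = k} := by
    refine ⟨MOCN.FF n m, MOCN.FF_drawing, ?_⟩
    rw [hG, MOCN.crossings_eq_TT, MOCN.TT_FF_card, MOCN.card_Q24, hval]
    ring
  have hub : ∀ k ∈ {k | ∃ f : Fin n ⊕ Fin m → Pt,
      IsRectDrawing f ∧ drawingCrossings G f = k}, k ≤ val := by
    rintro k ⟨f, hf, rfl⟩
    rw [hG, MOCN.crossings_eq_TT]
    calc (MOCN.TT f).card ≤ 2 * (MOCN.Q24 n m).card := MOCN.TT_card_le f hf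
      _ = val := by rw [MOCN.card_Q24, hval]; ring
  rw [MOCN]
  exact le_antisymm (csSup_le ⟨val, hmem⟩ hub) (le_csSup ⟨val, hub⟩ hmem)
end

section
/- For all natural numbers n, m ≥ 1 and every rectilinear drawing R of the complete bipartite graph K_{n,m}, the crossing number satisfies n(R(K_{n,m})) ≤ 2·(n choose 2)·(m choose 2) + 2m·(n choose 3) + 2n·(m choose 3). -/
set_option linter.unusedSectionVars false

/-- twice the signed area -/
def dt (p q r : Pt) : ℝ := (q.1 - p.1) * (r.2 - p.2) - (q.2 - p.2) * (r.1 - p.1)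

lemma coord1 (a : ℝ) (v p : Pt) : (a • v +ᵥ p).1 = a * v.1 + p.1 := rfl
lemma coord2 (a : ℝ) (v p : Pt) : (a • v +ᵥ p).2 = a * v.2 + p.2 := rfl

lemma collinear_iff_dt {p q r : Pt} : Collinear ℝ ({p, q, r} : Set Pt) ↔ dt p q r = 0 := by
  by_cases hpq : p = q
  · subst hpq
    simp only [Set.insert_comm, Set.insert_idem]
    rw [show ({p, r} : Set Pt) = {r, p} from Set.pair_comm p r]
    constructor
    · intro _; unfold dt; ring
    · intro _; exact collinear_pair ℝ r p
  rw [collinear_iff_of_mem (Set.mem_insert p _)]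
  constructor
  · rintro ⟨v, hv⟩
    obtain ⟨a, ha⟩ := hv p (by simp)
    obtain ⟨b, hb⟩ := hv q (by simp)
    obtain ⟨c, hc⟩ := hv r (by simp)
    have ha1 := congrArg Prod.fst ha; rw [coord1] at ha1
    have ha2 := congrArg Prod.snd ha; rw [coord2] at ha2
    have hb1 := congrArg Prod.fst hb; rw [coord1] at hb1
    have hb2 := congrArg Prod.snd hb; rw [coord2] at hb2
    have hc1 := congrArg Prod.fst hc; rw [coord1] at hc1
    have hc2 := congrArg Prod.snd hc; rw [coord2] at hc2
    have h1 : q.1 - p.1 = (b - a) * v.1 := by linear_combination hb1 - ha1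
    have h2 : q.2 - p.2 = (b - a) * v.2 := by linear_combination hb2 - ha2
    have h3 : r.1 - p.1 = (c - a) * v.1 := by linear_combination hc1 - ha1
    have h4 : r.2 - p.2 = (c - a) * v.2 := by linear_combination hc2 - ha2
    unfold dt
    rw [h1, h2, h3, h4]; ring
  · intro h
    refine ⟨q - p, fun x hx => ?_⟩
    rcases hx with rfl | rfl | rfl
    · exact ⟨0, by simp⟩
    · refine ⟨1, ?_⟩
      have : (1:ℝ) • (x - p) +ᵥ p = x := by
        apply Prod.ext <;> simp [coord1, coord2]
      exact this.symm
    · by_cases h1 : q.1 - p.1 ≠ 0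
      · refine ⟨(x.1 - p.1) / (q.1 - p.1), ?_⟩
        apply Prod.ext
        · rw [coord1]; field_simp; simp only [Prod.fst_sub]; ring
        · rw [coord2]
          unfold dt at h
          field_simp
          simp only [Prod.snd_sub]
          nlinarith [h]
      · push_neg at h1
        by_cases h2 : q.2 - p.2 ≠ 0
        · refine ⟨(x.2 - p.2) / (q.2 - p.2), ?_⟩
          apply Prod.ext
          · rw [coord1]
            unfold dt at h
            field_simp
            simp only [Prod.fst_sub]
            nlinarith [h]
          · rw [coord2]; field_simp; simp only [Prod.snd_sub]; ring
        · push_neg at h2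
          exfalso
          exact hpq (Prod.ext (by linarith) (by linarith)).symm

lemma mem_lineThrough_iff {p q : Pt} (hpq : p ≠ q) {x : Pt} :
    x ∈ lineThrough p q ↔ dt p q x = 0 := by
  rw [← collinear_iff_dt]
  constructor
  · intro hx
    have : Collinear ℝ (insert x ({p, q} : Set Pt)) :=
      collinear_insert_of_mem_affineSpan_pair hx
    refine this.subset ?_
    intro y hy
    rcases hy with rfl | rfl | rfl <;> simp
  · intro hcol
    exact hcol.mem_affineSpan_of_mem_of_ne (by simp) (by simp) (by simp) hpq

section sep
variable {p q : Pt}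

lemma dt_continuous (p q : Pt) : Continuous (dt p q) := by
  unfold dt; fun_prop

lemma convex_dt_pos (p q : Pt) : Convex ℝ {x : Pt | 0 < dt p q x} := by
  have : {x : Pt | 0 < dt p q x} =
      {x : Pt | (q.2 - p.2) * x.1 - (q.1 - p.1) * x.2 <
        (q.1 - p.1) * (-p.2) - (q.2 - p.2) * (-p.1)} := by
    ext x; simp only [Set.mem_setOf_eq]; constructor <;> intro h <;> unfold dt at * <;> nlinarith
  rw [this]
  exact convex_halfSpace_lt ⟨fun a b => by simp [Prod.fst_add, Prod.snd_add]; ring, fun c a => by simp [Prod.smul_fst, Prod.smul_snd]; ring⟩ _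

lemma convex_dt_neg (p q : Pt) : Convex ℝ {x : Pt | dt p q x < 0} := by
  have : {x : Pt | dt p q x < 0} =
      {x : Pt | (q.1 - p.1) * x.2 - (q.2 - p.2) * x.1 <
        (q.2 - p.2) * (-p.1) - (q.1 - p.1) * (-p.2)} := by
    ext x; simp only [Set.mem_setOf_eq]; constructor <;> intro h <;> unfold dt at * <;> nlinarith
  rw [this]
  exact convex_halfSpace_lt ⟨fun a b => by simp [Prod.fst_add, Prod.snd_add]; ring, fun c a => by simp [Prod.smul_fst, Prod.smul_snd]; ring⟩ _

lemma separates_iff (hpq : p ≠ q) (P Q : Pt) :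
    Separates (lineThrough p q) P Q ↔ dt p q P * dt p q Q < 0 := by
  set L := lineThrough p q with hL
  have hcompl : Lᶜ = {x : Pt | dt p q x ≠ 0} := by
    ext x; simp [hL, mem_lineThrough_iff hpq]
  have hopos : IsOpen {x : Pt | 0 < dt p q x} := isOpen_lt continuous_const (dt_continuous p q)
  have honeg : IsOpen {x : Pt | dt p q x < 0} := isOpen_lt (dt_continuous p q) continuous_const
  -- same component if in same convex piece
  have same : ∀ (S : Set Pt), Convex ℝ S → S ⊆ Lᶜ → ∀ x ∈ S, ∀ y ∈ S,
      connectedComponentIn Lᶜ x = connectedComponentIn Lᶜ y := by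
    intro S hconv hsub x hx y hy
    have h1 : S ⊆ connectedComponentIn Lᶜ x :=
      hconv.isPreconnected.subset_connectedComponentIn hx hsub
    exact (connectedComponentIn_eq (h1 hy))
  have diff : ∀ x y, 0 < dt p q x → dt p q y < 0 →
      connectedComponentIn Lᶜ x ≠ connectedComponentIn Lᶜ y := by
    intro x y hx hy heq
    have hxc : x ∈ Lᶜ := by rw [hcompl]; exact ne_of_gt hx
    have hyc : y ∈ Lᶜ := by rw [hcompl]; exact ne_of_lt hy
    have hyin : y ∈ connectedComponentIn Lᶜ x := by
      rw [heq]; exact mem_connectedComponentIn hyc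
    have hxin : x ∈ connectedComponentIn Lᶜ x := mem_connectedComponentIn hxc
    have hconn : IsPreconnected (connectedComponentIn Lᶜ x) :=
      isPreconnected_connectedComponentIn
    have hsub : connectedComponentIn Lᶜ x ⊆ {z : Pt | 0 < dt p q z} ∪ {z : Pt | dt p q z < 0} := by
      intro z hz
      have := connectedComponentIn_subset Lᶜ x hz
      rw [hcompl] at this
      rcases lt_or_gt_of_ne (this : dt p q z ≠ 0) with h | h
      · exact Or.inr h
      · exact Or.inl h
    obtain ⟨w, hw⟩ := hconn _ _ hopos honeg hsub ⟨x, hxin, hx⟩ ⟨y, hyin, hy⟩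
    have h1 : 0 < dt p q w := hw.2.1
    have h2 : dt p q w < 0 := hw.2.2
    linarith
  constructor
  · rintro ⟨hP, hQ, hne⟩
    have hP' : dt p q P ≠ 0 := by rwa [mem_lineThrough_iff hpq] at hP
    have hQ' : dt p q Q ≠ 0 := by rwa [mem_lineThrough_iff hpq] at hQ
    rcases lt_or_gt_of_ne hP' with h1 | h1 <;> rcases lt_or_gt_of_ne hQ' with h2 | h2
    · exfalso
      exact hne (same _ (convex_dt_neg p q) (by rw [hcompl]; intro z hz; exact ne_of_lt hz)
        P h1 Q h2)
    · exact mul_neg_of_neg_of_pos h1 h2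
    · exact mul_neg_of_pos_of_neg h1 h2
    · exfalso
      exact hne (same _ (convex_dt_pos p q) (by rw [hcompl]; intro z hz; exact ne_of_gt hz)
        P h1 Q h2)
  · intro h
    have hP' : dt p q P ≠ 0 := fun h0 => by simp [h0] at h
    have hQ' : dt p q Q ≠ 0 := fun h0 => by simp [h0] at h
    refine ⟨by rw [hL, mem_lineThrough_iff hpq] at *; exact hP',
            by rw [hL, mem_lineThrough_iff hpq] at *; exact hQ', ?_⟩
    rcases lt_or_gt_of_ne hP' with h1 | h1 <;> rcases lt_or_gt_of_ne hQ' with h2 | h2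
    · nlinarith
    · exact (diff Q P h2 h1).symm
    · exact diff P Q h1 h2
    · nlinarith
end sep

lemma signs3 {w x y z : ℝ} (hrel : w - x + y - z = 0)
    (h1 : z*w < 0) (h2 : 0 < z*x) (h3 : z*y < 0) : False := by
  rcases lt_trichotomy z 0 with hz | hz | hz
  · have hw : 0 < w := by nlinarith
    have hx : x < 0 := by nlinarith
    have hy : 0 < y := by nlinarith
    linarith
  · simp [hz] at h2
  · have hw : w < 0 := by nlinarith
    have hx : 0 < x := by nlinarith
    have hy : y < 0 := by nlinarith
    linarith

lemma signs4 {w x y z : ℝ} (hrel : w - x + y - z = 0) :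
    ¬(0 < y*w ∧ z*w < 0 ∧ x*y < 0) ∧ ¬(0 < y*w ∧ z*w < 0 ∧ 0 < z*x) ∧
    ¬(0 < y*w ∧ x*y < 0 ∧ 0 < z*x) ∧ ¬(z*w < 0 ∧ x*y < 0 ∧ 0 < z*x) := by
  refine ⟨?_, ?_, ?_, ?_⟩ <;> rintro ⟨h1, h2, h3⟩
  · rcases lt_trichotomy w 0 with hw | hw | hw
    · have hy : y < 0 := by nlinarith
      have hz : 0 < z := by nlinarith
      have hx : 0 < x := by nlinarith
      linarith
    · simp [hw] at h2
    · have hy : 0 < y := by nlinarith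
      have hz : z < 0 := by nlinarith
      have hx : x < 0 := by nlinarith
      linarith
  · rcases lt_trichotomy w 0 with hw | hw | hw
    · have hy : y < 0 := by nlinarith
      have hz : 0 < z := by nlinarith
      have hx : 0 < x := by nlinarith
      linarith
    · simp [hw] at h2
    · have hy : 0 < y := by nlinarith
      have hz : z < 0 := by nlinarith
      have hx : x < 0 := by nlinarith
      linarith
  · rcases lt_trichotomy y 0 with hy | hy | hy
    · have hw : w < 0 := by nlinarith
      have hx : 0 < x := by nlinarith
      have hz : 0 < z := by nlinarith
      linarith
    · simp [hy] at h1
    · have hw : 0 < w := by nlinarith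
      have hx : x < 0 := by nlinarith
      have hz : z < 0 := by nlinarith
      linarith
  · rcases lt_trichotomy z 0 with hz | hz | hz
    · have hw : 0 < w := by nlinarith
      have hx : x < 0 := by nlinarith
      have hy : 0 < y := by nlinarith
      linarith
    · simp [hz] at h1
    · have hw : w < 0 := by nlinarith
      have hx : 0 < x := by nlinarith
      have hy : y < 0 := by nlinarith
      linarith

/-- Key lemma, triangle version: the three edge-lines of a triangle cannot all
separate the opposite vertex from a common fourth point. -/
lemma key3 {A B C D : Pt} (hAB : A ≠ B) (hAC : A ≠ C) (hBC : B ≠ C) :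
    ¬(Separates (lineThrough B C) A D ∧ Separates (lineThrough A C) B D ∧
      Separates (lineThrough A B) C D) := by
  rintro ⟨h1, h2, h3⟩
  rw [separates_iff hBC] at h1
  rw [separates_iff hAC] at h2
  rw [separates_iff hAB] at h3
  have e1 : dt B C A = dt A B C := by unfold dt; ring
  have e2 : dt A C B = -dt A B C := by unfold dt; ring
  have hrel : dt B C D - dt A C D + dt A B D - dt A B C = 0 := by unfold dt; ring
  rw [e1] at h1; rw [e2] at h2
  exact signs3 hrel (by linarith [h1]) (by nlinarith [h2]) (by linarith [h3])

/-- Key lemma, mixed version: among the four "mixed" separation configurations of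
four points `A B C D` (`A,B` in one class, `C,D` in the other), no three can hold. -/
lemma key4 {A B C D : Pt} (hBD : B ≠ D) (hBC : B ≠ C) (hAD : A ≠ D) (hAC : A ≠ C) :
    ¬(Separates (lineThrough B D) A C ∧ Separates (lineThrough B C) A D ∧
        Separates (lineThrough A D) B C) ∧
    ¬(Separates (lineThrough B D) A C ∧ Separates (lineThrough B C) A D ∧
        Separates (lineThrough A C) B D) ∧
    ¬(Separates (lineThrough B D) A C ∧ Separates (lineThrough A D) B C ∧
        Separates (lineThrough A C) B D) ∧
    ¬(Separates (lineThrough B C) A D ∧ Separates (lineThrough A D) B C ∧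
        Separates (lineThrough A C) B D) := by
  have hrel : dt B C D - dt A C D + dt A B D - dt A B C = 0 := by unfold dt; ring
  obtain ⟨k1, k2, k3, k4⟩ := signs4 hrel
  have c11 : Separates (lineThrough B D) A C → 0 < dt A B D * dt B C D := by
    intro h; rw [separates_iff hBD] at h
    have e1 : dt B D A = dt A B D := by unfold dt; ring
    have e2 : dt B D C = -dt B C D := by unfold dt; ring
    rw [e1, e2] at h; nlinarith [h]
  have c12 : Separates (lineThrough B C) A D → dt A B C * dt B C D < 0 := by
    intro h; rw [separates_iff hBC] at h
    have e1 : dt B C A = dt A B C := by unfold dt; ring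
    rw [e1] at h; linarith [h]
  have c21 : Separates (lineThrough A D) B C → dt A C D * dt A B D < 0 := by
    intro h; rw [separates_iff hAD] at h
    have e1 : dt A D B = -dt A B D := by unfold dt; ring
    have e2 : dt A D C = -dt A C D := by unfold dt; ring
    rw [e1, e2] at h; nlinarith [h]
  have c22 : Separates (lineThrough A C) B D → 0 < dt A B C * dt A C D := by
    intro h; rw [separates_iff hAC] at h
    have e1 : dt A C B = -dt A B C := by unfold dt; ring
    rw [e1] at h; nlinarith [h]
  exact ⟨fun ⟨h1, h2, h3⟩ => k1 ⟨c11 h1, c12 h2, c21 h3⟩,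
         fun ⟨h1, h2, h3⟩ => k2 ⟨c11 h1, c12 h2, c22 h3⟩,
         fun ⟨h1, h2, h3⟩ => k3 ⟨c11 h1, c21 h2, c22 h3⟩,
         fun ⟨h1, h2, h3⟩ => k4 ⟨c12 h1, c21 h2, c22 h3⟩⟩

lemma lineThrough_comm (p q : Pt) : lineThrough p q = lineThrough q p := by
  unfold lineThrough; rw [Set.pair_comm]

/-! ### Counting helpers -/

lemma card_filter_le_step {α : Type*} [DecidableEq α] (P : α → Prop) [DecidablePred P]
    (x : α) (s : Finset α) :
    (Finset.filter P (insert x s)).card ≤ (if P x then 1 else 0) + (Finset.filter P s).card := by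
  rw [Finset.filter_insert]
  split_ifs with h
  · exact (Finset.card_insert_le _ _).trans (by omega)
  · omega

lemma card_filter_four {α : Type*} [DecidableEq α] (P : α → Prop) [DecidablePred P] (a b c d : α)
    (h1 : ¬(P a ∧ P b ∧ P c)) (h2 : ¬(P a ∧ P b ∧ P d)) (h3 : ¬(P a ∧ P c ∧ P d))
    (h4 : ¬(P b ∧ P c ∧ P d)) :
    (Finset.filter P ({a, b, c, d} : Finset α)).card ≤ 2 := by
  have key : (if P a then 1 else 0) + (if P b then 1 else 0) + (if P c then 1 else 0)
      + (if P d then 1 else 0) ≤ 2 := by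
    split_ifs <;> first | omega | tauto
  have s1 := card_filter_le_step P a ({b, c, d} : Finset α)
  have s2 := card_filter_le_step P b ({c, d} : Finset α)
  have s3 := card_filter_le_step P c ({d} : Finset α)
  have s4 : (Finset.filter P ({d} : Finset α)).card ≤ if P d then 1 else 0 := by
    rw [Finset.filter_singleton]; split_ifs <;> simp
  calc (Finset.filter P ({a, b, c, d} : Finset α)).card
      ≤ (if P a then 1 else 0) + (Finset.filter P ({b, c, d} : Finset α)).card := s1
    _ ≤ (if P a then 1 else 0) + ((if P b then 1 else 0)
          + (Finset.filter P ({c, d} : Finset α)).card) := Nat.add_le_add_left s2 _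
    _ ≤ (if P a then 1 else 0) + ((if P b then 1 else 0) + ((if P c then 1 else 0)
          + (Finset.filter P ({d} : Finset α)).card)) :=
        Nat.add_le_add_left (Nat.add_le_add_left s3 _) _
    _ ≤ (if P a then 1 else 0) + ((if P b then 1 else 0) + ((if P c then 1 else 0)
          + (if P d then 1 else 0))) :=
        Nat.add_le_add_left (Nat.add_le_add_left (Nat.add_le_add_left s4 _) _) _
    _ ≤ 2 := by linarith [key]

lemma card_filter_three {α : Type*} [DecidableEq α] (P : α → Prop) [DecidablePred P] (a b c : α)
    (h1 : ¬(P a ∧ P b ∧ P c)) :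
    (Finset.filter P ({a, b, c} : Finset α)).card ≤ 2 := by
  have key : (if P a then 1 else 0) + (if P b then 1 else 0) + (if P c then 1 else 0) ≤ 2 := by
    split_ifs <;> first | omega | tauto
  have s1 := card_filter_le_step P a ({b, c} : Finset α)
  have s2 := card_filter_le_step P b ({c} : Finset α)
  have s4 : (Finset.filter P ({c} : Finset α)).card ≤ if P c then 1 else 0 := by
    rw [Finset.filter_singleton]; split_ifs <;> simp
  calc (Finset.filter P ({a, b, c} : Finset α)).card
      ≤ (if P a then 1 else 0) + (Finset.filter P ({b, c} : Finset α)).card := s1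
    _ ≤ (if P a then 1 else 0) + ((if P b then 1 else 0)
          + (Finset.filter P ({c} : Finset α)).card) := Nat.add_le_add_left s2 _
    _ ≤ (if P a then 1 else 0) + ((if P b then 1 else 0) + (if P c then 1 else 0)) :=
        Nat.add_le_add_left (Nat.add_le_add_left s4 _) _
    _ ≤ 2 := by linarith [key]

/-! ### The main count -/

section Main

open scoped Classical

variable {n m : ℕ} (f : Fin n ⊕ Fin m → Pt)

/-- The separating-pair condition named in `sepCount` for an edge `(inl i, inr j)`. -/
def condS (i : Fin n) (j : Fin m) (e : Finset (Fin n ⊕ Fin m)) : Prop :=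
  ∃ a b : Fin n ⊕ Fin m, e = {a, b} ∧ a ≠ b ∧ Sum.inl i ∉ e ∧ Sum.inr j ∉ e ∧
    Separates (lineThrough (f a) (f b)) (f (Sum.inl i)) (f (Sum.inr j))

lemma sepCount_eq_card (i : Fin n) (j : Fin m) :
    sepCount f (Sum.inl i) (Sum.inr j) = (Finset.univ.filter (condS f i j)).card := by
  rw [← Set.ncard_coe_finset]
  unfold sepCount
  congr 1
  ext e
  simp only [Finset.coe_filter, Finset.mem_univ, true_and, Set.mem_setOf_eq]
  rfl

lemma sep_of_condS {i : Fin n} {j : Fin m} {e : Finset (Fin n ⊕ Fin m)} {u v : Fin n ⊕ Fin m}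
    (h : condS f i j e) (he : e = {u, v}) :
    Separates (lineThrough (f u) (f v)) (f (Sum.inl i)) (f (Sum.inr j)) := by
  obtain ⟨a, b, hab, hne, _, _, hs⟩ := h
  rw [he] at hab
  have h2 : ({u, v} : Set (Fin n ⊕ Fin m)) = {a, b} := by
    have := congrArg (fun s : Finset (Fin n ⊕ Fin m) => (s : Set (Fin n ⊕ Fin m))) hab
    simpa using this
  rcases Set.pair_eq_pair_iff.mp h2 with ⟨rfl, rfl⟩ | ⟨rfl, rfl⟩
  · exact hs
  · rw [lineThrough_comm]; exact hs

def lEmb : Fin n ↪ Fin n ⊕ Fin m := ⟨Sum.inl, Sum.inl_injective⟩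
def rEmb : Fin m ↪ Fin n ⊕ Fin m := ⟨Sum.inr, Sum.inr_injective⟩

def lpart (u : Finset (Fin n ⊕ Fin m)) : Finset (Fin n) :=
  Finset.univ.filter fun a => Sum.inl a ∈ u
def rpart (u : Finset (Fin n ⊕ Fin m)) : Finset (Fin m) :=
  Finset.univ.filter fun b => Sum.inr b ∈ u

lemma mem_lpart {u : Finset (Fin n ⊕ Fin m)} {a : Fin n} : a ∈ lpart u ↔ Sum.inl a ∈ u := by
  simp [lpart]
lemma mem_rpart {u : Finset (Fin n ⊕ Fin m)} {b : Fin m} : b ∈ rpart u ↔ Sum.inr b ∈ u := by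
  simp [rpart]

lemma decomp (u : Finset (Fin n ⊕ Fin m)) :
    u = (lpart u).map lEmb ∪ (rpart u).map rEmb := by
  ext x
  cases x <;> simp [lEmb, rEmb, mem_lpart, mem_rpart, Finset.mem_map]

lemma disj_parts (s1 : Finset (Fin n)) (s2 : Finset (Fin m)) :
    Disjoint (s1.map lEmb) (s2.map rEmb) := by
  rw [Finset.disjoint_left]
  rintro x hx hx'
  simp only [lEmb, Finset.mem_map, Function.Embedding.coeFn_mk] at hx
  simp only [rEmb, Finset.mem_map, Function.Embedding.coeFn_mk] at hx'
  obtain ⟨a, _, rfl⟩ := hx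
  obtain ⟨b, _, h⟩ := hx'
  cases h

lemma card_parts (u : Finset (Fin n ⊕ Fin m)) :
    (lpart u).card + (rpart u).card = u.card := by
  conv_rhs => rw [decomp u]
  rw [Finset.card_union_of_disjoint (disj_parts _ _), Finset.card_map, Finset.card_map]

lemma dc_eq : drawingCrossings (completeBipartiteGraph (Fin n) (Fin m)) f =
    ∑ p : Fin n × Fin m, sepCount f (Sum.inl p.1) (Sum.inr p.2) := by
  unfold drawingCrossings
  refine (Finset.sum_bij
    (fun (p : Fin n × Fin m) (_ : p ∈ Finset.univ) => s(Sum.inl p.1, Sum.inr p.2))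
    ?_ ?_ ?_ ?_).symm
  · intro p _
    rw [Set.Finite.mem_toFinset, SimpleGraph.mem_edgeSet, completeBipartiteGraph_adj]
    simp
  · intro p _ q _ h
    rw [Sym2.eq_iff] at h
    rcases h with ⟨h1, h2⟩ | ⟨h1, h2⟩
    · exact Prod.ext (Sum.inl_injective h1) (Sum.inr_injective h2)
    · exact absurd h1 (by simp)
  · intro e he
    rw [Set.Finite.mem_toFinset] at he
    induction e using Sym2.ind with
    | _ u v =>
      rw [SimpleGraph.mem_edgeSet, completeBipartiteGraph_adj] at he
      rcases u with u | u <;> rcases v with v | v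
      · simp at he
      · exact ⟨(u, v), Finset.mem_univ _, rfl⟩
      · exact ⟨(v, u), Finset.mem_univ _, Sym2.eq_swap⟩
      · simp at he
  · intro p _
    rw [Sym2.lift_mk]

lemma sdiff_pair_of_four {α : Type*} [DecidableEq α] {W : Finset α} {a b c d : α}
    (hmem : ∀ z, z ∈ W ↔ (z = a ∨ z = b ∨ z = c ∨ z = d))
    (hab : a ≠ b) (hbc : b ≠ c) (had : a ≠ d) (hcd : c ≠ d) :
    W \ {a, c} = {b, d} := by
  ext z
  simp only [Finset.mem_sdiff, hmem, Finset.mem_insert, Finset.mem_singleton]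
  constructor
  · rintro ⟨(rfl | rfl | rfl | rfl), h2⟩
    · exact absurd (Or.inl rfl) h2
    · exact Or.inl rfl
    · exact absurd (Or.inr rfl) h2
    · exact Or.inr rfl
  · rintro (rfl | rfl)
    · exact ⟨Or.inr (Or.inl rfl), by rintro (h | h); exact hab h.symm; exact hbc h⟩
    · exact ⟨Or.inr (Or.inr (Or.inr rfl)), by rintro (h | h); exact had h.symm; exact hcd h.symm⟩

set_option maxHeartbeats 2000000 in
lemma main_bound (hinj : Function.Injective f) :
    ∑ p : Fin n × Fin m, (Finset.univ.filter (condS f p.1 p.2)).card ≤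
      2 * (Nat.choose n 2 * Nat.choose m 2 + Nat.choose n 3 * m + n * Nat.choose m 3) := by
  classical
  -- the incidence set
  set T : Finset ((Fin n × Fin m) × Finset (Fin n ⊕ Fin m)) :=
    Finset.univ.filter (fun x => condS f x.1.1 x.1.2 x.2) with hT
  have hsum : T.card = ∑ p : Fin n × Fin m, (Finset.univ.filter (condS f p.1 p.2)).card := by
    rw [hT, Finset.card_filter, ← Finset.univ_product_univ, Finset.sum_product]
    exact Finset.sum_congr rfl fun p _ => (Finset.card_filter _ _).symm
  rw [← hsum]
  -- the target: pairs of subsets by composition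
  set Tgt : Finset (Finset (Fin n) × Finset (Fin m)) :=
    ((Finset.univ.powersetCard 2 ×ˢ Finset.univ.powersetCard 2) ∪
      Finset.univ.powersetCard 3 ×ˢ Finset.univ.powersetCard 1) ∪
      Finset.univ.powersetCard 1 ×ˢ Finset.univ.powersetCard 3 with hTgt
  have hTgtcard : Tgt.card =
      Nat.choose n 2 * Nat.choose m 2 + Nat.choose n 3 * m + n * Nat.choose m 3 := by
    have hd1 : Disjoint
        ((Finset.univ.powersetCard 2 ×ˢ Finset.univ.powersetCard 2 :
            Finset (Finset (Fin n) × Finset (Fin m))))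
        (Finset.univ.powersetCard 3 ×ˢ Finset.univ.powersetCard 1) := by
      rw [Finset.disjoint_left]
      rintro ⟨u, v⟩ h h'
      simp only [Finset.mem_product, Finset.mem_powersetCard] at h h'
      omega
    have hd2 : Disjoint
        ((Finset.univ.powersetCard 2 ×ˢ Finset.univ.powersetCard 2 :
            Finset (Finset (Fin n) × Finset (Fin m))) ∪
          Finset.univ.powersetCard 3 ×ˢ Finset.univ.powersetCard 1)
        (Finset.univ.powersetCard 1 ×ˢ Finset.univ.powersetCard 3) := by
      rw [Finset.disjoint_left]
      rintro ⟨u, v⟩ h h'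
      simp only [Finset.mem_union, Finset.mem_product, Finset.mem_powersetCard] at h h'
      omega
    rw [hTgt, Finset.card_union_of_disjoint hd2, Finset.card_union_of_disjoint hd1]
    simp [Finset.card_powersetCard, Nat.choose_one_right]
  rw [← hTgtcard]
  -- the classifying map
  set g : ((Fin n × Fin m) × Finset (Fin n ⊕ Fin m)) → Finset (Fin n) × Finset (Fin m) :=
    fun x => (lpart (insert (Sum.inl x.1.1) (insert (Sum.inr x.1.2) x.2)),
              rpart (insert (Sum.inl x.1.1) (insert (Sum.inr x.1.2) x.2))) with hg
  -- basic facts about elements of T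
  have hbasic : ∀ x ∈ T,
      (insert (Sum.inl x.1.1) (insert (Sum.inr x.1.2) x.2)).card = 4 := by
    rintro ⟨⟨i, j⟩, e⟩ hx
    rw [hT, Finset.mem_filter] at hx
    obtain ⟨a, b, he, hab, hi, hj, -⟩ := hx.2
    have h1 : Sum.inl i ∉ insert (Sum.inr j) e := by
      simp only [Finset.mem_insert]
      push_neg
      exact ⟨by simp, hi⟩
    rw [Finset.card_insert_of_notMem h1, Finset.card_insert_of_notMem hj, he,
      Finset.card_pair hab]
  apply Finset.card_le_mul_card_image_of_maps_to (f := g) (t := Tgt) ?_ 2 ?_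
  · -- maps to
    rintro x hx
    have hcard := hbasic x hx
    obtain ⟨⟨i, j⟩, e⟩ := x
    set U := insert (Sum.inl i) (insert (Sum.inr j) e) with hU
    have hsum4 : (lpart U).card + (rpart U).card = 4 := by rw [card_parts U, hcard]
    have hl1 : 1 ≤ (lpart U).card :=
      Finset.one_le_card.mpr ⟨i, mem_lpart.mpr (Finset.mem_insert_self _ _)⟩
    have hr1 : 1 ≤ (rpart U).card :=
      Finset.one_le_card.mpr ⟨j, mem_rpart.mpr
        (Finset.mem_insert_of_mem (Finset.mem_insert_self _ _))⟩
    have hcases : ((lpart U).card = 2 ∧ (rpart U).card = 2) ∨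
        ((lpart U).card = 3 ∧ (rpart U).card = 1) ∨
        ((lpart U).card = 1 ∧ (rpart U).card = 3) := by omega
    rw [hg]
    simp only [hTgt, Finset.mem_union, Finset.mem_product, Finset.mem_powersetCard,
      Finset.subset_univ, true_and]
    tauto
  · -- fiber bound
    rintro ⟨s1, s2⟩ hb
    set W : Finset (Fin n ⊕ Fin m) := s1.map lEmb ∪ s2.map rEmb with hW
    have hfact : ∀ x ∈ T.filter (fun x => g x = (s1, s2)),
        x.1.1 ∈ s1 ∧ x.1.2 ∈ s2 ∧ x.2 = W \ {Sum.inl x.1.1, Sum.inr x.1.2} ∧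
          condS f x.1.1 x.1.2 x.2 := by
      rintro ⟨⟨i, j⟩, e⟩ hx
      rw [Finset.mem_filter] at hx
      obtain ⟨hxT, hgx⟩ := hx
      have hcond : condS f i j e := by
        rw [hT, Finset.mem_filter] at hxT; exact hxT.2
      have hcard4 := hbasic _ hxT
      rw [hg] at hgx
      have hl : lpart (insert (Sum.inl i) (insert (Sum.inr j) e)) = s1 :=
        congrArg Prod.fst hgx
      have hr : rpart (insert (Sum.inl i) (insert (Sum.inr j) e)) = s2 :=
        congrArg Prod.snd hgx
      set U := insert (Sum.inl i) (insert (Sum.inr j) e) with hU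
      have hUW : U = W := by rw [decomp U, hl, hr]
      have hiW : Sum.inl i ∈ W := by rw [← hUW]; exact Finset.mem_insert_self _ _
      have hjW : Sum.inr j ∈ W := by
        rw [← hUW]; exact Finset.mem_insert_of_mem (Finset.mem_insert_self _ _)
      obtain ⟨a, b, he, hab, hi, hj, -⟩ := hcond
      have hecard : e.card = 2 := by rw [he]; exact Finset.card_pair hab
      have hWcard : W.card = 4 := by rw [← hUW]; exact hcard4
      have hsub : e ⊆ W \ {Sum.inl i, Sum.inr j} := by
        intro z hz
        rw [Finset.mem_sdiff]
        refine ⟨by rw [← hUW]; exact Finset.mem_insert_of_mem (Finset.mem_insert_of_mem hz), ?_⟩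
        simp only [Finset.mem_insert, Finset.mem_singleton]
        rintro (rfl | rfl)
        · exact hi hz
        · exact hj hz
      have hpairsub : ({Sum.inl i, Sum.inr j} : Finset (Fin n ⊕ Fin m)) ⊆ W := by
        intro z hz
        simp only [Finset.mem_insert, Finset.mem_singleton] at hz
        rcases hz with rfl | rfl
        · exact hiW
        · exact hjW
      have hdiffcard : (W \ {Sum.inl i, Sum.inr j}).card = 2 := by
        rw [Finset.card_sdiff_of_subset hpairsub, hWcard, Finset.card_pair (by simp)]
      have he' : e = W \ {Sum.inl i, Sum.inr j} :=
        Finset.eq_of_subset_of_card_le hsub (by omega)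
      refine ⟨?_, ?_, he', by rw [hT, Finset.mem_filter] at hxT; exact hxT.2⟩
      · rw [← hl]; exact mem_lpart.mpr (Finset.mem_insert_self _ _)
      · rw [← hr]; exact mem_rpart.mpr (Finset.mem_insert_of_mem (Finset.mem_insert_self _ _))
    have hAB : ∀ (u v : Fin n ⊕ Fin m), u ≠ v → f u ≠ f v := fun u v h hf' => h (hinj hf')
    rw [hTgt] at hb
    simp only [Finset.mem_union, Finset.mem_product, Finset.mem_powersetCard] at hb
    rcases hb with (⟨⟨-, hc1⟩, -, hc2⟩ | ⟨⟨-, hc1⟩, -, hc2⟩) | ⟨⟨-, hc1⟩, -, hc2⟩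
    · -- (2,2) case
      obtain ⟨i1, i2, hi12, rfl⟩ := Finset.card_eq_two.mp hc1
      obtain ⟨j1, j2, hj12, rfl⟩ := Finset.card_eq_two.mp hc2
      have e21 : (Sum.inl i2 : Fin n ⊕ Fin m) ≠ Sum.inl i1 := by simp [hi12.symm]
      have e12 : (Sum.inl i1 : Fin n ⊕ Fin m) ≠ Sum.inl i2 := by simp [hi12]
      have f21 : (Sum.inr j2 : Fin n ⊕ Fin m) ≠ Sum.inr j1 := by simp [hj12.symm]
      have f12 : (Sum.inr j1 : Fin n ⊕ Fin m) ≠ Sum.inr j2 := by simp [hj12]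
      have hWmem : ∀ z : Fin n ⊕ Fin m, z ∈ W ↔
          (z = Sum.inl i1 ∨ z = Sum.inl i2 ∨ z = Sum.inr j1 ∨ z = Sum.inr j2) := by
        intro z
        simp only [hW, Finset.map_insert, Finset.map_singleton, lEmb, rEmb,
          Function.Embedding.coeFn_mk, Finset.mem_union, Finset.mem_insert,
          Finset.mem_singleton]
        rw [or_assoc]
      have hC11 : W \ {Sum.inl i1, Sum.inr j1} = {Sum.inl i2, Sum.inr j2} :=
        sdiff_pair_of_four hWmem (by simp [hi12]) (by simp) (by simp) (by simp [hj12])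
      have hC12 : W \ {Sum.inl i1, Sum.inr j2} = {Sum.inl i2, Sum.inr j1} :=
        sdiff_pair_of_four (a := Sum.inl i1) (b := Sum.inl i2) (c := Sum.inr j2)
          (d := Sum.inr j1) (fun z => by rw [hWmem]; try tauto)
          (by simp [hi12]) (by simp) (by simp) (by simp [hj12.symm])
      have hC21 : W \ {Sum.inl i2, Sum.inr j1} = {Sum.inl i1, Sum.inr j2} :=
        sdiff_pair_of_four (a := Sum.inl i2) (b := Sum.inl i1) (c := Sum.inr j1)
          (d := Sum.inr j2) (fun z => by rw [hWmem]; try tauto)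
          (by simp [hi12.symm]) (by simp) (by simp) (by simp [hj12])
      have hC22 : W \ {Sum.inl i2, Sum.inr j2} = {Sum.inl i1, Sum.inr j1} :=
        sdiff_pair_of_four (a := Sum.inl i2) (b := Sum.inl i1) (c := Sum.inr j2)
          (d := Sum.inr j1) (fun z => by rw [hWmem]; try tauto)
          (by simp [hi12.symm]) (by simp) (by simp) (by simp [hj12.symm])
      set E : Fin n → Fin m → ((Fin n × Fin m) × Finset (Fin n ⊕ Fin m)) :=
        fun i j => ((i, j), W \ {Sum.inl i, Sum.inr j}) with hE
      set Ps : ((Fin n × Fin m) × Finset (Fin n ⊕ Fin m)) → Prop :=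
        fun x => condS f x.1.1 x.1.2 x.2 with hPs
      have hsubset : T.filter (fun x => g x = ({i1, i2}, {j1, j2})) ⊆
          Finset.filter Ps ({E i1 j1, E i1 j2, E i2 j1, E i2 j2} : Finset _) := by
        intro x hx
        obtain ⟨h1, h2, h3, h4⟩ := hfact x hx
        rw [Finset.mem_filter]
        refine ⟨?_, h4⟩
        obtain ⟨⟨i, j⟩, e⟩ := x
        simp only at h1 h2 h3
        subst h3
        simp only [Finset.mem_insert, Finset.mem_singleton] at h1 h2
        rcases h1 with rfl | rfl <;> rcases h2 with rfl | rfl <;> simp [hE]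
      refine le_trans (Finset.card_le_card hsubset) ?_
      obtain ⟨k1, k2, k3, k4⟩ := key4 (A := f (Sum.inl i1)) (B := f (Sum.inl i2))
        (C := f (Sum.inr j1)) (D := f (Sum.inr j2))
        (hAB _ _ (by simp)) (hAB _ _ (by simp)) (hAB _ _ (by simp)) (hAB _ _ (by simp))
      have hP11 : Ps (E i1 j1) → Separates (lineThrough (f (Sum.inl i2)) (f (Sum.inr j2)))
          (f (Sum.inl i1)) (f (Sum.inr j1)) := fun h => sep_of_condS f h hC11
      have hP12 : Ps (E i1 j2) → Separates (lineThrough (f (Sum.inl i2)) (f (Sum.inr j1)))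
          (f (Sum.inl i1)) (f (Sum.inr j2)) := fun h => sep_of_condS f h hC12
      have hP21 : Ps (E i2 j1) → Separates (lineThrough (f (Sum.inl i1)) (f (Sum.inr j2)))
          (f (Sum.inl i2)) (f (Sum.inr j1)) := fun h => sep_of_condS f h hC21
      have hP22 : Ps (E i2 j2) → Separates (lineThrough (f (Sum.inl i1)) (f (Sum.inr j1)))
          (f (Sum.inl i2)) (f (Sum.inr j2)) := fun h => sep_of_condS f h hC22
      exact card_filter_four Ps (E i1 j1) (E i1 j2) (E i2 j1) (E i2 j2)
        (fun ⟨ha, hb', hc⟩ => k1 ⟨hP11 ha, hP12 hb', hP21 hc⟩)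
        (fun ⟨ha, hb', hc⟩ => k2 ⟨hP11 ha, hP12 hb', hP22 hc⟩)
        (fun ⟨ha, hb', hc⟩ => k3 ⟨hP11 ha, hP21 hb', hP22 hc⟩)
        (fun ⟨ha, hb', hc⟩ => k4 ⟨hP12 ha, hP21 hb', hP22 hc⟩)
    · -- (3,1) case
      obtain ⟨i1, i2, i3, h12, h13, h23, rfl⟩ := Finset.card_eq_three.mp hc1
      obtain ⟨j, rfl⟩ := Finset.card_eq_one.mp hc2
      have hWmem : ∀ z : Fin n ⊕ Fin m, z ∈ W ↔
          (z = Sum.inl i1 ∨ z = Sum.inl i2 ∨ z = Sum.inl i3 ∨ z = Sum.inr j) := by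
        intro z
        simp only [hW, Finset.map_insert, Finset.map_singleton, lEmb, rEmb,
          Function.Embedding.coeFn_mk, Finset.mem_union, Finset.mem_insert,
          Finset.mem_singleton]
        tauto
      have hC1 : W \ {Sum.inl i1, Sum.inr j} = {Sum.inl i2, Sum.inl i3} :=
        sdiff_pair_of_four (a := Sum.inl i1) (b := Sum.inl i2) (c := Sum.inr j)
          (d := Sum.inl i3) (fun z => by rw [hWmem]; try tauto)
          (by simp [h12]) (by simp) (by simp [h13]) (by simp)
      have hC2 : W \ {Sum.inl i2, Sum.inr j} = {Sum.inl i1, Sum.inl i3} :=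
        sdiff_pair_of_four (a := Sum.inl i2) (b := Sum.inl i1) (c := Sum.inr j)
          (d := Sum.inl i3) (fun z => by rw [hWmem]; try tauto)
          (by simp [h12.symm]) (by simp) (by simp [h23]) (by simp)
      have hC3 : W \ {Sum.inl i3, Sum.inr j} = {Sum.inl i1, Sum.inl i2} :=
        sdiff_pair_of_four (a := Sum.inl i3) (b := Sum.inl i1) (c := Sum.inr j)
          (d := Sum.inl i2) (fun z => by rw [hWmem]; try tauto)
          (by simp [h13.symm]) (by simp) (by simp [h23.symm]) (by simp)
      set E : Fin n → ((Fin n × Fin m) × Finset (Fin n ⊕ Fin m)) :=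
        fun i => ((i, j), W \ {Sum.inl i, Sum.inr j}) with hE
      set Ps : ((Fin n × Fin m) × Finset (Fin n ⊕ Fin m)) → Prop :=
        fun x => condS f x.1.1 x.1.2 x.2 with hPs
      have hsubset : T.filter (fun x => g x = ({i1, i2, i3}, {j})) ⊆
          Finset.filter Ps ({E i1, E i2, E i3} : Finset _) := by
        intro x hx
        obtain ⟨h1, h2, h3, h4⟩ := hfact x hx
        rw [Finset.mem_filter]
        refine ⟨?_, h4⟩
        obtain ⟨⟨i, j'⟩, e⟩ := x
        simp only at h1 h2 h3
        subst h3
        simp only [Finset.mem_insert, Finset.mem_singleton] at h1 h2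
        subst h2
        rcases h1 with rfl | rfl | rfl <;> simp [hE]
      refine le_trans (Finset.card_le_card hsubset) ?_
      have hkey := key3 (A := f (Sum.inl i1)) (B := f (Sum.inl i2)) (C := f (Sum.inl i3))
        (hAB _ _ (by simp [h12])) (hAB _ _ (by simp [h13])) (hAB _ _ (by simp [h23]))
        (D := f (Sum.inr j))
      exact card_filter_three Ps (E i1) (E i2) (E i3)
        (fun ⟨ha, hb', hc⟩ => hkey
          ⟨sep_of_condS f ha hC1, sep_of_condS f hb' hC2, sep_of_condS f hc hC3⟩)
    · -- (1,3) case
      obtain ⟨i, rfl⟩ := Finset.card_eq_one.mp hc1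
      obtain ⟨j1, j2, j3, h12, h13, h23, rfl⟩ := Finset.card_eq_three.mp hc2
      have hWmem : ∀ z : Fin n ⊕ Fin m, z ∈ W ↔
          (z = Sum.inl i ∨ z = Sum.inr j1 ∨ z = Sum.inr j2 ∨ z = Sum.inr j3) := by
        intro z
        simp only [hW, Finset.map_insert, Finset.map_singleton, lEmb, rEmb,
          Function.Embedding.coeFn_mk, Finset.mem_union, Finset.mem_insert,
          Finset.mem_singleton]
      have hC1 : W \ {Sum.inl i, Sum.inr j1} = {Sum.inr j2, Sum.inr j3} :=
        sdiff_pair_of_four (a := Sum.inl i) (b := Sum.inr j2) (c := Sum.inr j1)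
          (d := Sum.inr j3) (fun z => by rw [hWmem]; try tauto)
          (by simp) (by simp [h12.symm]) (by simp) (by simp [h13])
      have hC2 : W \ {Sum.inl i, Sum.inr j2} = {Sum.inr j1, Sum.inr j3} :=
        sdiff_pair_of_four (a := Sum.inl i) (b := Sum.inr j1) (c := Sum.inr j2)
          (d := Sum.inr j3) (fun z => by rw [hWmem]; try tauto)
          (by simp) (by simp [h12]) (by simp) (by simp [h23])
      have hC3 : W \ {Sum.inl i, Sum.inr j3} = {Sum.inr j1, Sum.inr j2} :=
        sdiff_pair_of_four (a := Sum.inl i) (b := Sum.inr j1) (c := Sum.inr j3)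
          (d := Sum.inr j2) (fun z => by rw [hWmem]; try tauto)
          (by simp) (by simp [h13]) (by simp) (by simp [h23.symm])
      set E : Fin m → ((Fin n × Fin m) × Finset (Fin n ⊕ Fin m)) :=
        fun j => ((i, j), W \ {Sum.inl i, Sum.inr j}) with hE
      set Ps : ((Fin n × Fin m) × Finset (Fin n ⊕ Fin m)) → Prop :=
        fun x => condS f x.1.1 x.1.2 x.2 with hPs
      have hsubset : T.filter (fun x => g x = ({i}, {j1, j2, j3})) ⊆
          Finset.filter Ps ({E j1, E j2, E j3} : Finset _) := by
        intro x hx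
        obtain ⟨h1, h2, h3, h4⟩ := hfact x hx
        rw [Finset.mem_filter]
        refine ⟨?_, h4⟩
        obtain ⟨⟨i', j'⟩, e⟩ := x
        simp only at h1 h2 h3
        subst h3
        simp only [Finset.mem_insert, Finset.mem_singleton] at h1 h2
        subst h1
        rcases h2 with rfl | rfl | rfl <;> simp [hE]
      refine le_trans (Finset.card_le_card hsubset) ?_
      have hkey := key3 (A := f (Sum.inr j1)) (B := f (Sum.inr j2)) (C := f (Sum.inr j3))
        (hAB _ _ (by simp [h12])) (hAB _ _ (by simp [h13])) (hAB _ _ (by simp [h23]))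
        (D := f (Sum.inl i))
      exact card_filter_three Ps (E j1) (E j2) (E j3)
        (fun ⟨ha, hb', hc⟩ => hkey
          ⟨(sep_of_condS f ha hC1).symm, (sep_of_condS f hb' hC2).symm,
            (sep_of_condS f hc hC3).symm⟩)

end Main

set_option maxHeartbeats 1000000 in
/-- For n, m ≥ 1 and every rectilinear drawing of `K_{n,m}`,
`n(R(K_{n,m})) ≤ 2 C(n,2) C(m,2) + 2m C(n,3) + 2n C(m,3)`. -/
theorem stmt_12 (n m : ℕ) (hn : 1 ≤ n) (hm : 1 ≤ m)
    (f : Fin n ⊕ Fin m → Pt) (hf : IsRectDrawing f) :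
    drawingCrossings (completeBipartiteGraph (Fin n) (Fin m)) f ≤
      2 * Nat.choose n 2 * Nat.choose m 2 +
        2 * m * Nat.choose n 3 + 2 * n * Nat.choose m 3 := by
  classical
  obtain ⟨hinj, -⟩ := hf
  rw [dc_eq f]
  calc ∑ p : Fin n × Fin m, sepCount f (Sum.inl p.1) (Sum.inr p.2)
      = ∑ p : Fin n × Fin m, (Finset.univ.filter (condS f p.1 p.2)).card :=
        Finset.sum_congr rfl fun p _ => sepCount_eq_card f p.1 p.2
    _ ≤ 2 * (Nat.choose n 2 * Nat.choose m 2 + Nat.choose n 3 * m + n * Nat.choose m 3) :=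
        main_bound f hinj
    _ = 2 * Nat.choose n 2 * Nat.choose m 2 + 2 * m * Nat.choose n 3
          + 2 * n * Nat.choose m 3 := by ring
end

section
/- The Orchard crossing number of the complete bipartite graph K_{2,2} is 0 and the maximal Orchard crossing number of K_{2,2} is 2, i.e., OCN(K_{2,2}) = 0 and MOCN(K_{2,2}) = 2. -/
set_option linter.unusedSectionVars false

section Aux

def det3 (a b x : Pt) : ℝ := (b.1 - a.1) * (x.2 - a.2) - (b.2 - a.2) * (x.1 - a.1)

lemma mem_lineThrough_iff_s15 {a b x : Pt} :
    x ∈ lineThrough a b ↔ ∃ r : ℝ, r • (a - b) = x - a := by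
  unfold lineThrough
  rw [SetLike.mem_coe, ← AffineSubspace.vsub_right_mem_direction_iff_mem
      (left_mem_affineSpan_pair ℝ a b) x, direction_affineSpan, mem_vectorSpan_pair]
  rfl

lemma det3_eq_zero_of_mem {a b x : Pt} (h : x ∈ lineThrough a b) : det3 a b x = 0 := by
  obtain ⟨r, hr⟩ := mem_lineThrough_iff_s15.mp h
  have h1 : r * (a.1 - b.1) = x.1 - a.1 := congrArg Prod.fst hr
  have h2 : r * (a.2 - b.2) = x.2 - a.2 := congrArg Prod.snd hr
  unfold det3; rw [← h1, ← h2]; ring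

lemma mem_of_det3_eq_zero {a b x : Pt} (hab : a ≠ b) (h : det3 a b x = 0) :
    x ∈ lineThrough a b := by
  rw [mem_lineThrough_iff_s15]
  have hd : a.1 - b.1 ≠ 0 ∨ a.2 - b.2 ≠ 0 := by
    by_contra hc
    push_neg at hc
    exact hab (Prod.ext (by linarith [hc.1]) (by linarith [hc.2]))
  unfold det3 at h
  rcases hd with hd | hd
  · refine ⟨(x.1 - a.1) / (a.1 - b.1), Prod.ext ?_ ?_⟩ <;>
      · show (_ : ℝ) * (_ : ℝ) = (_ : ℝ)
        simp only [Prod.fst_sub, Prod.snd_sub]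
        field_simp
        try first | linear_combination h | linear_combination -h
  · refine ⟨(x.2 - a.2) / (a.2 - b.2), Prod.ext ?_ ?_⟩ <;>
      · show (_ : ℝ) * (_ : ℝ) = (_ : ℝ)
        simp only [Prod.fst_sub, Prod.snd_sub]
        field_simp
        try first | linear_combination h | linear_combination -h

lemma det3_comm (a b x : Pt) : det3 b a x = - det3 a b x := by unfold det3; ring

lemma det3_affine (a b P Q : Pt) {u v : ℝ} (huv : u + v = 1) :
    det3 a b (u • P + v • Q) = u * det3 a b P + v * det3 a b Q := by
  have h1 : (u • P + v • Q).1 = u * P.1 + v * Q.1 := rfl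
  have h2 : (u • P + v • Q).2 = u * P.2 + v * Q.2 := rfl
  have hv : v = 1 - u := by linarith
  subst hv
  unfold det3; rw [h1, h2]; ring

lemma continuous_det3 (a b : Pt) : Continuous (det3 a b) := by
  unfold det3; fun_prop

lemma notSep_of_pos {a b P Q : Pt} (hP : 0 < det3 a b P) (hQ : 0 < det3 a b Q) :
    ¬ Separates (lineThrough a b) P Q := by
  rintro ⟨-, -, hne⟩
  apply hne
  have hseg : segment ℝ P Q ⊆ (lineThrough a b)ᶜ := by
    rintro x ⟨u, v, hu, hv, huv, rfl⟩
    intro hxL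
    have h0 := det3_eq_zero_of_mem hxL
    rw [det3_affine a b P Q huv] at h0
    rcases lt_or_eq_of_le hu with hu' | hu'
    · nlinarith [mul_nonneg hv hQ.le, mul_pos hu' hP]
    · nlinarith [hu', mul_pos hQ (show (0:ℝ) < v by linarith)]
  have hPs : P ∈ segment ℝ P Q := left_mem_segment ℝ P Q
  have hQs : Q ∈ segment ℝ P Q := right_mem_segment ℝ P Q
  have hsub := (convex_segment P Q).isPreconnected.subset_connectedComponentIn hPs hseg
  exact connectedComponentIn_eq (hsub hQs)

lemma notSep {a b P Q : Pt} (h : 0 < det3 a b P * det3 a b Q) :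
    ¬ Separates (lineThrough a b) P Q := by
  rcases mul_pos_iff.mp h with ⟨h1, h2⟩ | ⟨h1, h2⟩
  · exact notSep_of_pos h1 h2
  · rw [lineThrough_comm]
    apply notSep_of_pos <;> rw [det3_comm] <;> linarith

lemma sep {a b P Q : Pt} (hab : a ≠ b) (h : det3 a b P * det3 a b Q < 0) :
    Separates (lineThrough a b) P Q := by
  have hPL : P ∉ lineThrough a b := fun hm => by
    rw [det3_eq_zero_of_mem hm] at h; simp at h
  have hQL : Q ∉ lineThrough a b := fun hm => by
    rw [det3_eq_zero_of_mem hm] at h; simp at h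
  refine ⟨hPL, hQL, fun heq => ?_⟩
  have hPC : P ∈ connectedComponentIn (lineThrough a b)ᶜ P := mem_connectedComponentIn hPL
  have hQC : Q ∈ connectedComponentIn (lineThrough a b)ᶜ P := by
    rw [heq]; exact mem_connectedComponentIn hQL
  set C := connectedComponentIn (lineThrough a b)ᶜ P with hC
  have hconn : IsPreconnected C := isPreconnected_connectedComponentIn
  have hcont : ContinuousOn (det3 a b) C := (continuous_det3 a b).continuousOn
  have h0 : (0 : ℝ) ∈ det3 a b '' C := by
    rcases mul_neg_iff.mp h with ⟨h1, h2⟩ | ⟨h1, h2⟩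
    · exact hconn.intermediate_value hQC hPC hcont ⟨le_of_lt h2, le_of_lt h1⟩
    · exact hconn.intermediate_value hPC hQC hcont ⟨le_of_lt h1, le_of_lt h2⟩
  obtain ⟨x, hxC, hx0⟩ := h0
  exact connectedComponentIn_subset _ _ hxC (mem_of_det3_eq_zero hab hx0)

lemma sep_iff {a b P Q : Pt} (hab : a ≠ b) :
    Separates (lineThrough a b) P Q ↔ det3 a b P * det3 a b Q < 0 := by
  refine ⟨fun hs => ?_, sep hab⟩
  rcases lt_trichotomy (det3 a b P * det3 a b Q) 0 with h | h | h
  · exact h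
  · exfalso
    rcases mul_eq_zero.mp h with h0 | h0
    · exact hs.1 (mem_of_det3_eq_zero hab h0)
    · exact hs.2.1 (mem_of_det3_eq_zero hab h0)
  · exact absurd hs (notSep h)

lemma not_collinear_of_det3 {p q r : Pt} (h : det3 p q r ≠ 0) :
    ¬ Collinear ℝ ({p, q, r} : Set Pt) := by
  intro hc
  have hpq : p ≠ q := by
    rintro rfl
    exact h (by unfold det3; ring)
  have hr : r ∈ lineThrough p q :=
    hc.mem_affineSpan_of_mem_of_ne (Set.mem_insert _ _)
      (Set.mem_insert_of_mem _ (Set.mem_insert _ _))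
      (Set.mem_insert_of_mem _ (Set.mem_insert_of_mem _ rfl)) hpq
  exact h (det3_eq_zero_of_mem hr)

section Excl
variable {D1 D2 D3 D4 : ℝ}

lemma excl_a (hrel : D1 - D2 + D3 - D4 = 0) (h1 : 0 < D1 * D3) (h2 : D4 * D1 < 0)
    (h3 : D2 * D3 < 0) : False := by
  rcases mul_pos_iff.mp h1 with ⟨a1, a3⟩ | ⟨a1, a3⟩ <;>
    rcases mul_neg_iff.mp h2 with ⟨b4, b1⟩ | ⟨b4, b1⟩ <;>
    rcases mul_neg_iff.mp h3 with ⟨c2, c3⟩ | ⟨c2, c3⟩ <;> linarith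

lemma excl_b (hrel : D1 - D2 + D3 - D4 = 0) (h1 : 0 < D1 * D3) (h2 : D4 * D1 < 0)
    (h4 : 0 < D2 * D4) : False := by
  rcases mul_pos_iff.mp h1 with ⟨a1, a3⟩ | ⟨a1, a3⟩ <;>
    rcases mul_neg_iff.mp h2 with ⟨b4, b1⟩ | ⟨b4, b1⟩ <;>
    rcases mul_pos_iff.mp h4 with ⟨c2, c4⟩ | ⟨c2, c4⟩ <;> linarith

lemma excl_c (hrel : D1 - D2 + D3 - D4 = 0) (h1 : 0 < D1 * D3) (h3 : D2 * D3 < 0)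
    (h4 : 0 < D2 * D4) : False := by
  rcases mul_pos_iff.mp h1 with ⟨a1, a3⟩ | ⟨a1, a3⟩ <;>
    rcases mul_neg_iff.mp h3 with ⟨b2, b3⟩ | ⟨b2, b3⟩ <;>
    rcases mul_pos_iff.mp h4 with ⟨c2, c4⟩ | ⟨c2, c4⟩ <;> linarith

lemma excl_d (hrel : D1 - D2 + D3 - D4 = 0) (h2 : D4 * D1 < 0) (h3 : D2 * D3 < 0)
    (h4 : 0 < D2 * D4) : False := by
  rcases mul_neg_iff.mp h2 with ⟨b4, b1⟩ | ⟨b4, b1⟩ <;>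
    rcases mul_neg_iff.mp h3 with ⟨c2, c3⟩ | ⟨c2, c3⟩ <;>
    rcases mul_pos_iff.mp h4 with ⟨d2, d4⟩ | ⟨d2, d4⟩ <;> linarith

end Excl

lemma count_le (P1 P2 P3 P4 : Pt) :
    (if det3 P2 P4 P1 * det3 P2 P4 P3 < 0 then 1 else 0) +
    (if det3 P2 P3 P1 * det3 P2 P3 P4 < 0 then 1 else 0) +
    (if det3 P1 P4 P2 * det3 P1 P4 P3 < 0 then 1 else 0) +
    (if det3 P1 P3 P2 * det3 P1 P3 P4 < 0 then 1 else 0) ≤ 2 := by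
  set D1 := det3 P2 P3 P4 with hD1
  set D2 := det3 P1 P3 P4 with hD2
  set D3 := det3 P1 P2 P4 with hD3
  set D4 := det3 P1 P2 P3 with hD4
  have hrel : D1 - D2 + D3 - D4 = 0 := by rw [hD1, hD2, hD3, hD4]; unfold det3; ring
  have e1 : det3 P2 P4 P1 * det3 P2 P4 P3 = -(D1 * D3) := by
    rw [hD1, hD3]; unfold det3; ring
  have e2 : det3 P2 P3 P1 * det3 P2 P3 P4 = D4 * D1 := by
    rw [hD1, hD4]; unfold det3; ring
  have e3 : det3 P1 P4 P2 * det3 P1 P4 P3 = D2 * D3 := by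
    rw [hD2, hD3]; unfold det3; ring
  have e4 : det3 P1 P3 P2 * det3 P1 P3 P4 = -(D2 * D4) := by
    rw [hD2, hD4]; unfold det3; ring
  rw [e1, e2, e3, e4]; simp only [neg_lt_zero]
  by_cases h1 : 0 < D1 * D3 <;> by_cases h2 : D4 * D1 < 0 <;>
    by_cases h3 : D2 * D3 < 0 <;> by_cases h4 : 0 < D2 * D4 <;>
    simp only [h1, h2, h3, h4, if_true, if_false, if_pos, if_neg, not_false_iff]
  all_goals first
    | exact (excl_a hrel h1 h2 h3).elim
    | exact (excl_b hrel h1 h2 h4).elim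
    | exact (excl_c hrel h1 h3 h4).elim
    | exact (excl_d hrel h2 h3 h4).elim
    | norm_num


section Comb
open scoped Classical
variable {V : Type*} [Fintype V] [DecidableEq V]

lemma sepCount_four (f : V → Pt) (s t c d : V)
    (hcover : ∀ x : V, x = s ∨ x = t ∨ x = c ∨ x = d)
    (hcd : c ≠ d) (hcs : c ≠ s) (hct : c ≠ t) (hds : d ≠ s) (hdt : d ≠ t) :
    sepCount f s t = if Separates (lineThrough (f c) (f d)) (f s) (f t) then 1 else 0 := by
  unfold sepCount
  by_cases hsep : Separates (lineThrough (f c) (f d)) (f s) (f t)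
  · rw [if_pos hsep]
    have hset : {e : Finset V | ∃ a b : V, e = {a, b} ∧ a ≠ b ∧ s ∉ e ∧ t ∉ e ∧
        Separates (lineThrough (f a) (f b)) (f s) (f t)} = {({c, d} : Finset V)} := by
      ext e
      constructor
      · rintro ⟨a, b, rfl, hab, hs, ht, -⟩
        simp only [Finset.mem_insert, Finset.mem_singleton, not_or] at hs ht
        have ha : a = c ∨ a = d := by
          rcases hcover a with rfl | rfl | rfl | rfl
          · exact absurd rfl hs.1
          · exact absurd rfl ht.1
          · exact Or.inl rfl
          · exact Or.inr rfl
        have hb : b = c ∨ b = d := by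
          rcases hcover b with rfl | rfl | rfl | rfl
          · exact absurd rfl hs.2
          · exact absurd rfl ht.2
          · exact Or.inl rfl
          · exact Or.inr rfl
        simp only [Set.mem_singleton_iff]
        rcases ha with rfl | rfl <;> rcases hb with rfl | rfl
        · exact absurd rfl hab
        · rfl
        · exact Finset.pair_comm _ _
        · exact absurd rfl hab
      · rintro rfl
        refine ⟨c, d, rfl, hcd, ?_, ?_, hsep⟩
        · simp only [Finset.mem_insert, Finset.mem_singleton, not_or]
          exact ⟨fun h => hcs h.symm, fun h => hds h.symm⟩
        · simp only [Finset.mem_insert, Finset.mem_singleton, not_or]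
          exact ⟨fun h => hct h.symm, fun h => hdt h.symm⟩
    rw [hset, Set.ncard_singleton]
  · rw [if_neg hsep]
    have hset : {e : Finset V | ∃ a b : V, e = {a, b} ∧ a ≠ b ∧ s ∉ e ∧ t ∉ e ∧
        Separates (lineThrough (f a) (f b)) (f s) (f t)} = ∅ := by
      ext e
      simp only [Set.mem_empty_iff_false, iff_false, Set.mem_setOf_eq]
      rintro ⟨a, b, rfl, hab, hs, ht, hsep'⟩
      simp only [Finset.mem_insert, Finset.mem_singleton, not_or] at hs ht
      have ha : a = c ∨ a = d := by
        rcases hcover a with rfl | rfl | rfl | rfl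
        · exact absurd rfl hs.1
        · exact absurd rfl ht.1
        · exact Or.inl rfl
        · exact Or.inr rfl
      have hb : b = c ∨ b = d := by
        rcases hcover b with rfl | rfl | rfl | rfl
        · exact absurd rfl hs.2
        · exact absurd rfl ht.2
        · exact Or.inl rfl
        · exact Or.inr rfl
      rcases ha with rfl | rfl <;> rcases hb with rfl | rfl
      · exact hab rfl
      · exact hsep hsep'
      · rw [lineThrough_comm] at hsep'
        exact hsep hsep'
      · exact hab rfl
    rw [hset, Set.ncard_empty]

end Comb

section K22

abbrev V22 : Type := Fin 2 ⊕ Fin 2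
abbrev G22 : SimpleGraph V22 := completeBipartiteGraph (Fin 2) (Fin 2)

lemma edges_eq : G22.edgeSet.toFinite.toFinset =
    ({s(Sum.inl 0, Sum.inr 0), s(Sum.inl 0, Sum.inr 1),
      s(Sum.inl 1, Sum.inr 0), s(Sum.inl 1, Sum.inr 1)} : Finset (Sym2 V22)) := by
  ext e
  rw [Set.Finite.mem_toFinset]
  induction e using Sym2.ind with
  | _ x y =>
    rw [SimpleGraph.mem_edgeSet]
    revert x y
    simp only [completeBipartiteGraph_adj]
    decide

lemma crossings_eq (f : V22 → Pt) :
    drawingCrossings G22 f =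
      sepCount f (Sum.inl 0) (Sum.inr 0) + sepCount f (Sum.inl 0) (Sum.inr 1) +
      sepCount f (Sum.inl 1) (Sum.inr 0) + sepCount f (Sum.inl 1) (Sum.inr 1) := by
  unfold drawingCrossings
  rw [edges_eq]
  rw [show ({s(Sum.inl 0, Sum.inr 0), s(Sum.inl 0, Sum.inr 1),
      s(Sum.inl 1, Sum.inr 0), s(Sum.inl 1, Sum.inr 1)} : Finset (Sym2 V22)) =
      insert s(Sum.inl 0, Sum.inr 0) (insert s(Sum.inl 0, Sum.inr 1)
        (insert s(Sum.inl 1, Sum.inr 0) ({s(Sum.inl 1, Sum.inr 1)} : Finset (Sym2 V22)))) from rfl]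
  rw [Finset.sum_insert (by decide), Finset.sum_insert (by decide),
    Finset.sum_insert (by decide), Finset.sum_singleton]
  simp only [Sym2.lift_mk]
  ring

lemma hcover1 : ∀ x : V22, x = Sum.inl 0 ∨ x = Sum.inr 0 ∨ x = Sum.inl 1 ∨ x = Sum.inr 1 := by
  decide
lemma hcover2 : ∀ x : V22, x = Sum.inl 0 ∨ x = Sum.inr 1 ∨ x = Sum.inl 1 ∨ x = Sum.inr 0 := by
  decide
lemma hcover3 : ∀ x : V22, x = Sum.inl 1 ∨ x = Sum.inr 0 ∨ x = Sum.inl 0 ∨ x = Sum.inr 1 := by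
  decide
lemma hcover4 : ∀ x : V22, x = Sum.inl 1 ∨ x = Sum.inr 1 ∨ x = Sum.inl 0 ∨ x = Sum.inr 0 := by
  decide

open Classical in
lemma crossings_formula (f : V22 → Pt) :
    drawingCrossings G22 f =
      (if Separates (lineThrough (f (Sum.inl 1)) (f (Sum.inr 1)))
          (f (Sum.inl 0)) (f (Sum.inr 0)) then 1 else 0) +
      (if Separates (lineThrough (f (Sum.inl 1)) (f (Sum.inr 0)))
          (f (Sum.inl 0)) (f (Sum.inr 1)) then 1 else 0) +
      (if Separates (lineThrough (f (Sum.inl 0)) (f (Sum.inr 1)))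
          (f (Sum.inl 1)) (f (Sum.inr 0)) then 1 else 0) +
      (if Separates (lineThrough (f (Sum.inl 0)) (f (Sum.inr 0)))
          (f (Sum.inl 1)) (f (Sum.inr 1)) then 1 else 0) := by
  rw [crossings_eq f,
    sepCount_four f (Sum.inl 0) (Sum.inr 0) (Sum.inl 1) (Sum.inr 1) hcover1
      (by decide) (by decide) (by decide) (by decide) (by decide),
    sepCount_four f (Sum.inl 0) (Sum.inr 1) (Sum.inl 1) (Sum.inr 0) hcover2
      (by decide) (by decide) (by decide) (by decide) (by decide),
    sepCount_four f (Sum.inl 1) (Sum.inr 0) (Sum.inl 0) (Sum.inr 1) hcover3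
      (by decide) (by decide) (by decide) (by decide) (by decide),
    sepCount_four f (Sum.inl 1) (Sum.inr 1) (Sum.inl 0) (Sum.inr 0) hcover4
      (by decide) (by decide) (by decide) (by decide) (by decide)]

end K22

section K22B

lemma crossings_le_two (f : V22 → Pt) (hf : IsRectDrawing f) :
    drawingCrossings G22 f ≤ 2 := by
  obtain ⟨hinj, -⟩ := hf
  have h24 : f (Sum.inl 1) ≠ f (Sum.inr 1) := fun h => by simpa using hinj h
  have h23 : f (Sum.inl 1) ≠ f (Sum.inr 0) := fun h => by simpa using hinj h
  have h14 : f (Sum.inl 0) ≠ f (Sum.inr 1) := fun h => by simpa using hinj h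
  have h13 : f (Sum.inl 0) ≠ f (Sum.inr 0) := fun h => by simpa using hinj h
  rw [crossings_formula]
  simp only [sep_iff h24, sep_iff h23, sep_iff h14, sep_iff h13]
  exact count_le (f (Sum.inl 0)) (f (Sum.inl 1)) (f (Sum.inr 0)) (f (Sum.inr 1))

/-- Drawing with zero crossings. -/
def fDraw (A B C D : Pt) : V22 → Pt := fun v =>
  match v with
  | Sum.inl i => if i = 0 then A else B
  | Sum.inr i => if i = 0 then C else D

def f0 : V22 → Pt := fDraw (0, 0) (1, 1) (1, 0) (0, 1)
def f2 : V22 → Pt := fDraw (0, 0) (1, 0) (1, 1) (0, 1)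

lemma f0_vals : f0 (Sum.inl 0) = ((0 : ℝ), (0 : ℝ)) ∧ f0 (Sum.inl 1) = ((1 : ℝ), (1 : ℝ)) ∧
    f0 (Sum.inr 0) = ((1 : ℝ), (0 : ℝ)) ∧ f0 (Sum.inr 1) = ((0 : ℝ), (1 : ℝ)) := by
  refine ⟨rfl, ?_, rfl, ?_⟩ <;> simp [f0, fDraw]

lemma rect_of_four {A B C D : Pt}
    (hd : det3 A B C ≠ 0 ∧ det3 A B D ≠ 0 ∧ det3 A C D ≠ 0 ∧ det3 B C D ≠ 0) :
    IsRectDrawing (fDraw A B C D) := by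
  have hAB : A ≠ B := by rintro rfl; exact hd.1 (by unfold det3; ring)
  have hAC : A ≠ C := by rintro rfl; exact hd.2.2.1 (by unfold det3; ring)
  have hAD : A ≠ D := by
    rintro rfl
    refine hd.2.2.1 ?_
    unfold det3; ring
  have hBC : B ≠ C := by rintro rfl; exact hd.2.2.2 (by unfold det3; ring)
  have hBD : B ≠ D := by
    rintro rfl
    refine hd.2.2.2 ?_
    unfold det3; ring
  have hCD : C ≠ D := by
    rintro rfl
    refine hd.2.2.2 ?_
    unfold det3; ring
  constructor
  · intro a b h
    rcases a with a | a <;> rcases b with b | b <;> fin_cases a <;> fin_cases b <;>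
      simp only [fDraw, if_pos, if_neg, reduceIte] at h <;>
      first
        | rfl
        | exact absurd h hAB | exact absurd h hAB.symm
        | exact absurd h hAC | exact absurd h hAC.symm
        | exact absurd h hAD | exact absurd h hAD.symm
        | exact absurd h hBC | exact absurd h hBC.symm
        | exact absurd h hBD | exact absurd h hBD.symm
        | exact absurd h hCD | exact absurd h hCD.symm
  · refine ⟨Set.finite_range _, ?_⟩
    rintro p ⟨u, rfl⟩ q ⟨v, rfl⟩ r ⟨w, rfl⟩ hpq hpr hqr
    apply not_collinear_of_det3
    have hsgn : ∀ x y z : Pt, det3 x y z ≠ 0 → det3 x z y ≠ 0 ∧ det3 y x z ≠ 0 ∧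
        det3 y z x ≠ 0 ∧ det3 z x y ≠ 0 ∧ det3 z y x ≠ 0 := by
      intro x y z h
      refine ⟨fun h' => h ?_, fun h' => h ?_, fun h' => h ?_, fun h' => h ?_, fun h' => h ?_⟩ <;>
        (unfold det3 at h' ⊢; linarith)
    obtain ⟨d1, d2, d3, d4⟩ := hd
    rcases u with u | u <;> rcases v with v | v <;> rcases w with w | w <;>
      fin_cases u <;> fin_cases v <;> fin_cases w <;>
      simp only [fDraw, reduceIte] at hpq hpr hqr ⊢ <;>
      first
        | exact absurd rfl hpq | exact absurd rfl hpr | exact absurd rfl hqr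
        | exact d1 | exact d2 | exact d3 | exact d4
        | exact (hsgn _ _ _ d1).1 | exact (hsgn _ _ _ d1).2.1 | exact (hsgn _ _ _ d1).2.2.1
        | exact (hsgn _ _ _ d1).2.2.2.1 | exact (hsgn _ _ _ d1).2.2.2.2
        | exact (hsgn _ _ _ d2).1 | exact (hsgn _ _ _ d2).2.1 | exact (hsgn _ _ _ d2).2.2.1
        | exact (hsgn _ _ _ d2).2.2.2.1 | exact (hsgn _ _ _ d2).2.2.2.2
        | exact (hsgn _ _ _ d3).1 | exact (hsgn _ _ _ d3).2.1 | exact (hsgn _ _ _ d3).2.2.1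
        | exact (hsgn _ _ _ d3).2.2.2.1 | exact (hsgn _ _ _ d3).2.2.2.2
        | exact (hsgn _ _ _ d4).1 | exact (hsgn _ _ _ d4).2.1 | exact (hsgn _ _ _ d4).2.2.1
        | exact (hsgn _ _ _ d4).2.2.2.1 | exact (hsgn _ _ _ d4).2.2.2.2

lemma f0_rect : IsRectDrawing f0 := by
  apply rect_of_four
  refine ⟨?_, ?_, ?_, ?_⟩ <;> norm_num [det3]

lemma f2_rect : IsRectDrawing f2 := by
  apply rect_of_four
  refine ⟨?_, ?_, ?_, ?_⟩ <;> norm_num [det3]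

lemma f0_crossings : drawingCrossings G22 f0 = 0 := by
  rw [crossings_formula]
  rw [if_neg, if_neg, if_neg, if_neg]
  · apply notSep; show (0:ℝ) < det3 (f0 (Sum.inl 0)) (f0 (Sum.inr 0)) _ * _
    norm_num [f0, fDraw, det3]
  · apply notSep; norm_num [f0, fDraw, det3]
  · apply notSep; norm_num [f0, fDraw, det3]
  · apply notSep; norm_num [f0, fDraw, det3]

lemma f2_crossings : drawingCrossings G22 f2 = 2 := by
  rw [crossings_formula]
  rw [if_pos, if_neg, if_neg, if_pos]
  · apply sep
    · intro h; rw [Prod.ext_iff] at h; norm_num [f2, fDraw] at h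
    · norm_num [f2, fDraw, det3]
  · apply notSep; norm_num [f2, fDraw, det3]
  · apply notSep; norm_num [f2, fDraw, det3]
  · apply sep
    · intro h; rw [Prod.ext_iff] at h; norm_num [f2, fDraw] at h
    · norm_num [f2, fDraw, det3]

end K22B

end Aux

/-- `OCN(K_{2,2}) = 0` and `MOCN(K_{2,2}) = 2`. -/
theorem stmt_15 :
    OCN (completeBipartiteGraph (Fin 2) (Fin 2)) = 0 ∧
      MOCN (completeBipartiteGraph (Fin 2) (Fin 2)) = 2 := by
  have hub : ∀ n ∈ {n | ∃ f : V22 → Pt, IsRectDrawing f ∧ drawingCrossings G22 f = n}, n ≤ 2 := by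
    rintro n ⟨f, hf, rfl⟩
    exact crossings_le_two f hf
  constructor
  · apply Nat.sInf_eq_zero.mpr
    exact Or.inl ⟨f0, f0_rect, f0_crossings⟩
  · apply le_antisymm
    · exact csSup_le ⟨0, f0, f0_rect, f0_crossings⟩ hub
    · exact le_csSup ⟨2, hub⟩ ⟨f2, f2_rect, f2_crossings⟩
end
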